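/- arXiv:2006.11898 — 9 statements merged into one kernel-verified Lean document; each statement's English description precedes it below -/
import Mathlib

section
/- A subset S of BS(1,q) is recognizable if and only if there exists an integer k ≥ 1 such that S is k-periodic: for every integer q ≥ 2 and every subset S of GL (Fin 2) ℚ with S ⊆ BS(1,q), S is recognizable if and only if there is k ≥ 1 such that for every g ∈ BS(1,q) one has (g ∈ S ↔ g * t^k ∈ S) and, for every ℓ : ℤ, (g ∈ S ↔ g * u k ℓ ∈ S). -/
/-!
Every element of `BS(1,q)` is `shear b * t ^ m` with `b ∈ ℤ[1/q]`, and a set `S` is recognizable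
exactly when its group of right periods has finite index. A finite quotient of order `k` kills
`t ^ k`, hence also `u k ℓ = ⁅t ^ ℓ a t ^ (-ℓ), t ^ k⁆`. Conversely, periods containing `t ^ k`
and all `u k ℓ` contain every shear by `(q ^ k - 1) ℤ[1/q]`; as `q` is invertible modulo
`q ^ k - 1`, every element of `ℤ[1/q]` is an integer modulo that lattice, so finitely many cosets
`a ^ s t ^ r` cover `BS(1,q)` and the normal core of the periods is a recognizing finite quotient.
-/

open Matrix

/-- The element `a` of `BS(1,q)`, with matrix `!![1, 1; 0, 1]`. -/
noncomputable def aElem : GL (Fin 2) ℚ :=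
  Matrix.GeneralLinearGroup.mkOfDetNeZero !![1, 1; 0, 1] (by norm_num [Matrix.det_fin_two_of])

/-- The element `t` of `BS(1,q)`, with matrix `!![(q : ℚ), 0; 0, 1]`. -/
noncomputable def tElem (q : ℕ) (hq : 2 ≤ q) : GL (Fin 2) ℚ :=
  Matrix.GeneralLinearGroup.mkOfDetNeZero !![(q : ℚ), 0; 0, 1]
    (by
      have hq0 : (q : ℚ) ≠ 0 := by
        simpa using (Nat.cast_ne_zero (R := ℚ)).2 (by omega)
      simp [Matrix.det_fin_two_of, hq0])

/-- `BS(1,q)` as the subgroup of `GL (Fin 2) ℚ` generated by `a` and `t`. -/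
noncomputable def BS (q : ℕ) (hq : 2 ≤ q) : Subgroup (GL (Fin 2) ℚ) :=
  Subgroup.closure {aElem, tElem q hq}

/-- The element `u k ℓ` with matrix `!![1, q^ℓ - q^(ℓ+k); 0, 1]`. -/
noncomputable def uElem (q : ℕ) (k ℓ : ℤ) : GL (Fin 2) ℚ :=
  Matrix.GeneralLinearGroup.mkOfDetNeZero !![1, (q : ℚ) ^ ℓ - (q : ℚ) ^ (ℓ + k); 0, 1]
    (by norm_num [Matrix.det_fin_two_of])

/-- A subset `S ⊆ BS(1,q)` is recognizable if it is recognized (as a subset of the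
subgroup `BS(1,q)`) by a group morphism onto a finite group. -/
def IsRecognizable (q : ℕ) (hq : 2 ≤ q) (S : Set (GL (Fin 2) ℚ)) : Prop :=
  ∃ (K : Type) (_ : Group K) (_ : Finite K) (φ : (BS q hq) →* K),
    ∀ x y : (BS q hq), φ x = φ y →
      ((x : GL (Fin 2) ℚ) ∈ S ↔ (y : GL (Fin 2) ℚ) ∈ S)

open scoped commutatorElement

section Periods

variable {G : Type*} [Group G]

def periods (H : Subgroup G) (S : Set G) : Subgroup G where
  carrier := {h | h ∈ H ∧ ∀ g ∈ H, (g ∈ S ↔ g * h ∈ S)}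
  one_mem' := ⟨H.one_mem, fun g _ => by rw [mul_one]⟩
  mul_mem' := fun {h h'} ⟨hH, hS⟩ ⟨h'H, h'S⟩ =>
    ⟨H.mul_mem hH h'H, fun g hg => by rw [hS g hg, h'S (g * h) (H.mul_mem hg hH), mul_assoc]⟩
  inv_mem' := fun {h} ⟨hH, hS⟩ =>
    ⟨H.inv_mem hH, fun g hg => by
      rw [hS (g * h⁻¹) (H.mul_mem hg (H.inv_mem hH)), inv_mul_cancel_right]⟩

theorem coe_mem_periods_of_map_eq_one {H : Subgroup G} {S : Set G} {K : Type*} [Group K]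
    (φ : H →* K) (hφ : ∀ x y : H, φ x = φ y → ((x : G) ∈ S ↔ (y : G) ∈ S))
    {x : H} (hx : φ x = 1) : (x : G) ∈ periods H S :=
  ⟨x.2, fun g hg => by simpa using hφ ⟨g, hg⟩ (⟨g, hg⟩ * x) (by rw [map_mul, hx, mul_one])⟩

theorem exists_finite_recognizer_of_finiteIndex {G : Type} [Group G] {H : Subgroup G}
    {S : Set G} [((periods H S).subgroupOf H).FiniteIndex] :
    ∃ (K : Type) (_ : Group K) (_ : Finite K) (φ : H →* K),
      ∀ x y : H, φ x = φ y → ((x : G) ∈ S ↔ (y : G) ∈ S) := by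
  let N := ((periods H S).subgroupOf H).normalCore
  refine ⟨H ⧸ N, inferInstance, Subgroup.finite_quotient_of_finiteIndex,
    QuotientGroup.mk' N, fun x y hxy => ?_⟩
  have hxy : ((x⁻¹ * y : H) : G) ∈ periods H S :=
    Subgroup.mem_subgroupOf.1 (Subgroup.normalCore_le _ (QuotientGroup.eq.1 hxy))
  simpa using hxy.2 x x.2

end Periods

section PowSpan

variable {K : Type*} [DivisionRing K]

def powSpan (x : K) : AddSubgroup K :=
  AddSubgroup.closure (Set.range (x ^ · : ℤ → K))

theorem zpow_mem_powSpan (x : K) (m : ℤ) : x ^ m ∈ powSpan x :=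
  AddSubgroup.subset_closure ⟨m, rfl⟩

theorem intCast_mem_powSpan (x : K) (n : ℤ) : (n : K) ∈ powSpan x := by
  simpa using zsmul_mem (zpow_mem_powSpan x 0) n

theorem zpow_mul_mem_powSpan {x : K} (hx : x ≠ 0) (m : ℤ) {b : K} (hb : b ∈ powSpan x) :
    x ^ m * b ∈ powSpan x := by
  induction hb using AddSubgroup.closure_induction with
  | mem _ h =>
    obtain ⟨n, rfl⟩ := h
    rw [← zpow_add₀ hx]
    exact zpow_mem_powSpan x _
  | zero => simp
  | add _ _ _ _ h h' => rw [mul_add]; exact add_mem h h'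
  | neg _ _ h => rw [mul_neg]; exact neg_mem h

end PowSpan

theorem exists_intCast_add_mul_of_mem_powSpan {q k : ℕ} (hq : q ≠ 0) (hk : 0 < k) {b : ℚ}
    (hb : b ∈ powSpan (q : ℚ)) :
    ∃ s : ℤ, ∃ c ∈ powSpan (q : ℚ), b = s + ((q : ℚ) ^ k - 1) * c := by
  have hq0 : (q : ℚ) ≠ 0 := by exact_mod_cast hq
  induction hb using AddSubgroup.closure_induction with
  | mem _ h =>
    obtain ⟨m, rfl⟩ := h
    -- `q ^ k ≡ 1`, so `q ^ m ≡ q ^ (m + k * j)` for every `j`; take `j = |m|` to reach an integer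
    set j := m.natAbs
    have hj : 0 ≤ m + k * j := by
      have : (j : ℤ) ≤ k * j := le_mul_of_one_le_left (by positivity) (by exact_mod_cast hk)
      omega
    refine ⟨(q : ℤ) ^ (m + k * j).toNat, -(q : ℚ) ^ m * ∑ i ∈ Finset.range j, ((q : ℚ) ^ k) ^ i,
      ?_, ?_⟩
    · rw [neg_mul, Finset.mul_sum]
      refine neg_mem (sum_mem fun i _ => ?_)
      rw [← zpow_natCast, ← zpow_natCast, ← _root_.zpow_mul, ← zpow_add₀ hq0]
      exact zpow_mem_powSpan _ _
    · have hpow : (((q : ℤ) ^ (m + k * j).toNat : ℤ) : ℚ) = (q : ℚ) ^ m * ((q : ℚ) ^ k) ^ j := by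
        rw [Int.cast_pow, Int.cast_natCast, ← zpow_natCast, Int.toNat_of_nonneg hj,
          zpow_add₀ hq0, _root_.zpow_mul]
        norm_cast
      rw [hpow]
      linear_combination (q : ℚ) ^ m * geom_sum_mul ((q : ℚ) ^ k) j
  | zero => exact ⟨0, 0, zero_mem _, by simp⟩
  | add _ _ _ _ h h' =>
    obtain ⟨s, c, hc, rfl⟩ := h
    obtain ⟨s', c', hc', rfl⟩ := h'
    exact ⟨s + s', c + c', add_mem hc hc', by push_cast; ring⟩
  | neg _ _ h =>
    obtain ⟨s, c, hc, rfl⟩ := h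
    exact ⟨-s, -c, neg_mem hc, by push_cast; ring⟩

theorem exists_mem_Ico_add_mul_of_mem_powSpan {q k : ℕ} (hq : 2 ≤ q) (hk : 0 < k) {b : ℚ}
    (hb : b ∈ powSpan (q : ℚ)) :
    ∃ s ∈ Set.Ico 0 ((q : ℤ) ^ k - 1), ∃ c ∈ powSpan (q : ℚ), b = s + ((q : ℚ) ^ k - 1) * c := by
  obtain ⟨s, c, hc, rfl⟩ := exists_intCast_add_mul_of_mem_powSpan (by omega) hk hb
  have hN : 0 < (q : ℤ) ^ k - 1 := sub_pos.2 (one_lt_pow₀ (by omega) hk.ne')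
  refine ⟨s % ((q : ℤ) ^ k - 1), ⟨Int.emod_nonneg _ hN.ne', Int.emod_lt_of_pos _ hN⟩,
    c + (s / ((q : ℤ) ^ k - 1) : ℤ), add_mem hc (intCast_mem_powSpan _ _), ?_⟩
  conv_lhs => rw [← Int.emod_add_mul_ediv s ((q : ℤ) ^ k - 1)]
  push_cast
  ring

noncomputable def shear (b : ℚ) : GL (Fin 2) ℚ :=
  Matrix.GeneralLinearGroup.mkOfDetNeZero !![1, b; 0, 1] (by norm_num [Matrix.det_fin_two_of])

theorem shear_add (b c : ℚ) : shear (b + c) = shear b * shear c := by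
  ext i j
  fin_cases i <;> fin_cases j <;> simp [shear, Matrix.mul_apply, Fin.sum_univ_two, add_comm]

theorem shear_zero : shear 0 = 1 := by
  ext i j
  fin_cases i <;> fin_cases j <;> simp [shear]

theorem shear_neg (b : ℚ) : shear (-b) = (shear b)⁻¹ :=
  eq_inv_of_mul_eq_one_left (by rw [← shear_add, neg_add_cancel, shear_zero])

theorem aElem_eq_shear : aElem = shear 1 := rfl

theorem uElem_eq_shear (q : ℕ) (k ℓ : ℤ) :
    uElem q k ℓ = shear ((q : ℚ) ^ ℓ - (q : ℚ) ^ (ℓ + k)) := rfl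

theorem shear_mul_mem {P : Subgroup (GL (Fin 2) ℚ)} {x N : ℚ}
    (h : ∀ ℓ : ℤ, shear (N * x ^ ℓ) ∈ P) {c : ℚ} (hc : c ∈ powSpan x) : shear (N * c) ∈ P := by
  induction hc using AddSubgroup.closure_induction with
  | mem _ hc => obtain ⟨ℓ, rfl⟩ := hc; exact h ℓ
  | zero => simp [shear_zero, P.one_mem]
  | add _ _ _ _ h h' => rw [mul_add, shear_add]; exact P.mul_mem h h'
  | neg _ _ h => rw [mul_neg, shear_neg]; exact P.inv_mem h

section BS

variable {q : ℕ} (hq : 2 ≤ q)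

theorem tElem_mul_shear (b : ℚ) : tElem q hq * shear b = shear (q * b) * tElem q hq := by
  ext i j
  fin_cases i <;> fin_cases j <;> simp [shear, tElem, Matrix.mul_apply, Fin.sum_univ_two]

theorem tElem_zpow_mul_shear (m : ℤ) (b : ℚ) :
    tElem q hq ^ m * shear b = shear ((q : ℚ) ^ m * b) * tElem q hq ^ m := by
  have hq0 : (q : ℚ) ≠ 0 := by positivity
  induction m using Int.induction_on generalizing b with
  | zero => simp
  | succ n ih =>
    rw [_root_.zpow_add_one, mul_assoc, tElem_mul_shear, ← mul_assoc, ih, mul_assoc,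
      zpow_add_one₀ hq0, mul_assoc ((q : ℚ) ^ (n : ℤ))]
  | pred n ih =>
    have h : (tElem q hq)⁻¹ * shear b = shear ((q : ℚ)⁻¹ * b) * (tElem q hq)⁻¹ := by
      rw [inv_mul_eq_iff_eq_mul, ← mul_assoc, tElem_mul_shear, mul_inv_cancel_left₀ hq0,
        mul_inv_cancel_right]
    rw [_root_.zpow_sub_one, mul_assoc, h, ← mul_assoc, ih, mul_assoc, zpow_sub_one₀ hq0,
      mul_assoc ((q : ℚ) ^ (-(n : ℤ)))]

theorem commutatorElement_shear_tElem_zpow (b : ℚ) (m : ℤ) :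
    ⁅shear b, tElem q hq ^ m⁆ = shear (b - (q : ℚ) ^ m * b) := by
  rw [commutatorElement_def, ← shear_neg, mul_assoc (shear b), tElem_zpow_mul_shear, ← mul_assoc,
    ← shear_add, mul_assoc, mul_inv_cancel, mul_one, mul_neg, sub_eq_add_neg]

theorem uElem_eq_commutatorElement (k ℓ : ℤ) :
    uElem q k ℓ = ⁅shear ((q : ℚ) ^ ℓ), tElem q hq ^ k⁆ := by
  have hq0 : (q : ℚ) ≠ 0 := by positivity
  rw [commutatorElement_shear_tElem_zpow, uElem_eq_shear, zpow_add₀ hq0, mul_comm ((q : ℚ) ^ ℓ)]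

theorem aElem_mem_BS : aElem ∈ BS q hq := Subgroup.subset_closure (by simp)

theorem tElem_mem_BS : tElem q hq ∈ BS q hq := Subgroup.subset_closure (by simp)

theorem shear_mem_BS {b : ℚ} (hb : b ∈ powSpan (q : ℚ)) : shear b ∈ BS q hq := by
  have h (ℓ : ℤ) : shear (1 * (q : ℚ) ^ ℓ) ∈ BS q hq := by
    rw [one_mul, ← mul_one ((q : ℚ) ^ ℓ), eq_mul_inv_of_mul_eq (tElem_zpow_mul_shear hq ℓ 1).symm,
      ← aElem_eq_shear]
    exact mul_mem (mul_mem (zpow_mem (tElem_mem_BS hq) ℓ) (aElem_mem_BS hq))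
      (inv_mem (zpow_mem (tElem_mem_BS hq) ℓ))
  simpa using shear_mul_mem h hb

theorem exists_eq_shear_mul_tElem_zpow {g : GL (Fin 2) ℚ} (hg : g ∈ BS q hq) :
    ∃ b ∈ powSpan (q : ℚ), ∃ m : ℤ, g = shear b * tElem q hq ^ m := by
  have hq0 : (q : ℚ) ≠ 0 := by positivity
  induction hg using Subgroup.closure_induction with
  | mem g hg =>
    rcases hg with rfl | rfl
    · exact ⟨1, by simpa using zpow_mem_powSpan (q : ℚ) 0, 0, by simp [aElem_eq_shear]⟩
    · exact ⟨0, zero_mem _, 1, by simp [shear_zero]⟩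
  | one => exact ⟨0, zero_mem _, 0, by simp [shear_zero]⟩
  | mul _ _ _ _ hg hh =>
    obtain ⟨b, hb, m, rfl⟩ := hg
    obtain ⟨b', hb', m', rfl⟩ := hh
    refine ⟨b + (q : ℚ) ^ m * b', add_mem hb (zpow_mul_mem_powSpan hq0 m hb'), m + m', ?_⟩
    rw [shear_add, _root_.zpow_add, mul_assoc (shear b), ← mul_assoc _ (shear b'),
      tElem_zpow_mul_shear, mul_assoc, mul_assoc]
  | inv _ _ hg =>
    obtain ⟨b, hb, m, rfl⟩ := hg
    refine ⟨(q : ℚ) ^ (-m) * -b, zpow_mul_mem_powSpan hq0 _ (neg_mem hb), -m, ?_⟩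
    rw [← tElem_zpow_mul_shear, _root_.mul_inv_rev, shear_neg, _root_.zpow_neg]

theorem uElem_mem_BS (k ℓ : ℤ) : uElem q k ℓ ∈ BS q hq :=
  shear_mem_BS hq (sub_mem (zpow_mem_powSpan _ _) (zpow_mem_powSpan _ _))

end BS

section Periodic

variable {q : ℕ} {hq : 2 ≤ q} {S : Set (GL (Fin 2) ℚ)}

theorem periodic_of_isRecognizable (h : IsRecognizable q hq S) :
    ∃ k : ℕ, 0 < k ∧ tElem q hq ^ (k : ℤ) ∈ periods (BS q hq) S ∧
      ∀ ℓ : ℤ, uElem q k ℓ ∈ periods (BS q hq) S := by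
  obtain ⟨K, _, _, φ, hφ⟩ := h
  let τ : BS q hq := ⟨tElem q hq, tElem_mem_BS hq⟩
  have hτ : φ τ ^ Nat.card K = 1 := pow_card_eq_one'
  refine ⟨Nat.card K, Nat.card_pos, ?_, fun ℓ => ?_⟩
  · simpa using coe_mem_periods_of_map_eq_one φ hφ (x := τ ^ Nat.card K) (by rw [map_pow, hτ])
  · let ξ : BS q hq := ⟨shear ((q : ℚ) ^ ℓ), shear_mem_BS hq (zpow_mem_powSpan _ ℓ)⟩
    have h := coe_mem_periods_of_map_eq_one φ hφ (x := ⁅ξ, τ ^ Nat.card K⁆)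
      (by rw [map_commutatorElement, map_pow, hτ, commutatorElement_one_right])
    simpa [uElem_eq_commutatorElement hq, commutatorElement_def] using h

variable {k : ℕ}

theorem exists_inv_mul_mem_periods (hk : 0 < k) (ht : tElem q hq ^ (k : ℤ) ∈ periods (BS q hq) S)
    (hu : ∀ ℓ : ℤ, uElem q k ℓ ∈ periods (BS q hq) S) {g : GL (Fin 2) ℚ} (hg : g ∈ BS q hq) :
    ∃ s ∈ Set.Ico 0 ((q : ℤ) ^ k - 1), ∃ r ∈ Set.Ico 0 (k : ℤ),
      (shear s * tElem q hq ^ r)⁻¹ * g ∈ periods (BS q hq) S := by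
  have hq0 : (q : ℚ) ≠ 0 := by positivity
  have hshear : ∀ c ∈ powSpan (q : ℚ), shear (((q : ℚ) ^ k - 1) * c) ∈ periods (BS q hq) S := by
    refine fun c hc => shear_mul_mem (fun ℓ => ?_) hc
    convert inv_mem (hu ℓ) using 1
    rw [uElem_eq_shear, ← shear_neg, zpow_add₀ hq0]
    congr 1
    rw [zpow_natCast]
    ring
  obtain ⟨b, hb, m, rfl⟩ := exists_eq_shear_mul_tElem_zpow hq hg
  obtain ⟨s, hs, c, hc, rfl⟩ := exists_mem_Ico_add_mul_of_mem_powSpan hq hk hb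
  have hk0 : (k : ℤ) ≠ 0 := by exact_mod_cast hk.ne'
  refine ⟨s, hs, m % k, ⟨Int.emod_nonneg _ hk0, Int.emod_lt_of_pos _ (by exact_mod_cast hk)⟩, ?_⟩
  set t := tElem q hq
  have hm : t ^ m = t ^ (m % k) * (t ^ (k : ℤ)) ^ (m / k) := by
    rw [← _root_.zpow_mul, ← _root_.zpow_add, Int.emod_add_mul_ediv]
  have key : (shear s * t ^ (m % k))⁻¹ * (shear (s + ((q : ℚ) ^ k - 1) * c) * t ^ m)
      = shear (((q : ℚ) ^ k - 1) * ((q : ℚ) ^ (-(m % k)) * c)) * (t ^ (k : ℤ)) ^ (m / k) := by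
    rw [shear_add, hm, _root_.mul_inv_rev]
    simp only [mul_assoc, inv_mul_cancel_left]
    rw [← _root_.zpow_neg, ← mul_assoc, tElem_zpow_mul_shear, mul_assoc, ← mul_assoc (t ^ _),
      ← _root_.zpow_add, neg_add_cancel, zpow_zero, one_mul, mul_left_comm]
  rw [key]
  exact mul_mem (hshear _ (zpow_mul_mem_powSpan hq0 _ hc)) (zpow_mem ht _)

theorem finiteIndex_periods (hk : 0 < k) (ht : tElem q hq ^ (k : ℤ) ∈ periods (BS q hq) S)
    (hu : ∀ ℓ : ℤ, uElem q k ℓ ∈ periods (BS q hq) S) :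
    ((periods (BS q hq) S).subgroupOf (BS q hq)).FiniteIndex := by
  let F : ℤ × ℤ → BS q hq ⧸ (periods (BS q hq) S).subgroupOf (BS q hq) := fun p =>
    (⟨shear p.1 * tElem q hq ^ p.2, mul_mem (shear_mem_BS hq (intCast_mem_powSpan _ _))
      (zpow_mem (tElem_mem_BS hq) _)⟩ : BS q hq)
  have hF : Set.univ ⊆ F '' (Set.Ico 0 ((q : ℤ) ^ k - 1) ×ˢ Set.Ico 0 (k : ℤ)) := by
    intro x _
    obtain ⟨⟨g, hg⟩, rfl⟩ := QuotientGroup.mk_surjective x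
    obtain ⟨s, hs, r, hr, hmem⟩ := exists_inv_mul_mem_periods hk ht hu hg
    exact ⟨(s, r), ⟨hs, hr⟩, QuotientGroup.eq.2 (Subgroup.mem_subgroupOf.2 hmem)⟩
  have : Finite (BS q hq ⧸ (periods (BS q hq) S).subgroupOf (BS q hq)) :=
    Set.finite_univ_iff.1 ((((Set.finite_Ico _ _).prod (Set.finite_Ico _ _)).image F).subset hF)
  exact Subgroup.finiteIndex_of_finite_quotient

end Periodic

theorem isRecognizable_iff_periodic_general (q : ℕ) (hq : 2 ≤ q) (S : Set (GL (Fin 2) ℚ)) :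
    IsRecognizable q hq S ↔
      ∃ k : ℤ, 1 ≤ k ∧ ∀ g ∈ BS q hq,
        (g ∈ S ↔ g * (tElem q hq) ^ k ∈ S) ∧
        (∀ ℓ : ℤ, (g ∈ S ↔ g * uElem q k ℓ ∈ S)) := by
  constructor
  · intro h
    obtain ⟨k, hk, ht, hu⟩ := periodic_of_isRecognizable h
    exact ⟨k, by omega, fun g hg => ⟨ht.2 g hg, fun ℓ => (hu ℓ).2 g hg⟩⟩
  · rintro ⟨k, hk, hper⟩
    lift k to ℕ using by omega
    have := finiteIndex_periods (S := S) (by omega)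
      ⟨zpow_mem (tElem_mem_BS hq) _, fun g hg => (hper g hg).1⟩
      fun ℓ => ⟨uElem_mem_BS hq _ ℓ, fun g hg => (hper g hg).2 ℓ⟩
    exact exists_finite_recognizer_of_finiteIndex

/-- A subset `S ⊆ BS(1,q)` is recognizable iff it is `k`-periodic for some `k ≥ 1`. -/
theorem isRecognizable_iff_periodic (q : ℕ) (hq : 2 ≤ q) (S : Set (GL (Fin 2) ℚ))
    (hSsub : S ⊆ (BS q hq : Set (GL (Fin 2) ℚ))) :
    IsRecognizable q hq S ↔
      ∃ k : ℤ, 1 ≤ k ∧ ∀ g ∈ BS q hq,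
        (g ∈ S ↔ g * (tElem q hq) ^ k ∈ S) ∧
        (∀ ℓ : ℤ, (g ∈ S ↔ g * uElem q k ℓ ∈ S)) :=
  isRecognizable_iff_periodic_general q hq S
end

section
/- The PE-regular subsets of BS(1,2) are not closed under generated submonoids: let S be the additive submonoid of ℚ generated by {x : ℚ | ∃ i : ℕ, 1 ≤ i ∧ x = 1 + 2^(−(i:ℤ))}. Then the subset {M ∈ GL (Fin 2) ℚ | ∃ r ∈ S, the matrix of M is !![1, r; 0, 1]} of BS(1,2) is not PE-regular (here q = 2). -/
/-!
For `k = 2 ^ (n + 1)` the submonoid contains `k + 1 - 2 ^ (-k)` (the sum of the generators with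
`i = 1, …, k`), whose pointed expansion is `+10…0.1…1` with `n` zeros and `k` ones. Pumping down
inside the block `+10…0` either destroys the sign or leaves a word `+D0.1…1` with `D` of length
at most `n`, which represents `2N + 1 - 2 ^ (-k)` with `2N < k`. Such a number is not in the
submonoid: a sum of `m` generators is `m` plus `m` dyadic fractions `2 ^ (-i)`, so `m < k`, while
the fractional part `1 - 2 ^ (-k)` has `k` binary ones after the point and needs at least `k`
such fractions.
-/

open Matrix

/-- The PE-alphabet. -/
def PELetter (q : ℕ) := Bool ⊕ (Fin q × Bool × Bool)

/-- `w` is a PE-representation of the element `M` of `GL (Fin 2) ℚ`. -/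
def IsPERep (q : ℕ) (M : GL (Fin 2) ℚ) (w : List (PELetter q)) : Prop :=
  ∃ (ε : Bool) (ds : List (Fin q × Bool × Bool)),
    w = Sum.inl ε :: ds.map Sum.inr ∧ ds ≠ [] ∧
    ∃ (m : ℤ) (r : ℚ) (k₂ : ℕ), k₂ < ds.length ∧
      (M : Matrix (Fin 2) (Fin 2) ℚ) = !![(q : ℚ) ^ m, r; 0, 1] ∧
      (∀ j : Fin ds.length, (ds.get j).2.1 = true ↔ (j : ℕ) = ds.length - 1 - k₂) ∧
      (∃! j : Fin ds.length, (ds.get j).2.2 = true) ∧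
      (∀ j : Fin ds.length, (ds.get j).2.2 = true →
        ((ds.length : ℤ) - 1 - (j : ℕ)) - (k₂ : ℤ) = m) ∧
      (if ε then (1 : ℚ) else -1) *
        (∑ j : Fin ds.length,
          ((ds.get j).1 : ℚ) * (q : ℚ) ^ (((ds.length : ℤ) - 1 - (j : ℕ)) - (k₂ : ℤ))) = r

/-- `w` is the pointed expansion of `M`: a PE-representation of minimal length. -/
def IsPE (q : ℕ) (M : GL (Fin 2) ℚ) (w : List (PELetter q)) : Prop :=
  IsPERep q M w ∧ ∀ w' : List (PELetter q), IsPERep q M w' → w.length ≤ w'.length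

/-- A subset of `BS(1,q)` is PE-regular if the language of pointed expansions of its
elements is a regular language. -/
def IsPERegular (q : ℕ) (R : Set (GL (Fin 2) ℚ)) : Prop :=
  Language.IsRegular {w : List (PELetter q) | ∃ M ∈ R, IsPE q M w}

-- Lets the `Sum` and `List` lemmas see through the alphabet in words of type `List (PELetter q)`.
attribute [reducible] PELetter

namespace BSSubmonoid

def sumTwoPow (l : List ℕ) : ℕ := (l.map (2 ^ ·)).sum

lemma sumTwoPow_cons (e : ℕ) (l : List ℕ) : sumTwoPow (e :: l) = 2 ^ e + sumTwoPow l := rfl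

/-- Binary carrying: pairs of `2 ^ 0` merge into `2 ^ 1`, then every exponent drops by one. -/
def halve (l : List ℕ) : List ℕ :=
  List.replicate (l.count 0 / 2) 0 ++ (l.filter (· ≠ 0)).map (· - 1)

lemma sumTwoPow_eq_count_zero_add (l : List ℕ) :
    sumTwoPow l = l.count 0 + 2 * sumTwoPow ((l.filter (· ≠ 0)).map (· - 1)) := by
  induction l with
  | nil => rfl
  | cons e l ih =>
    rcases e with _ | e <;> simp [sumTwoPow, pow_succ] at ih ⊢ <;> omega

lemma length_filter_ne_zero_add_count (l : List ℕ) :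
    (l.filter (· ≠ 0)).length + l.count 0 = l.length := by
  induction l with
  | nil => rfl
  | cons e l ih =>
    rcases e with _ | e <;> simp at ih ⊢ <;> omega

lemma sumTwoPow_halve (l : List ℕ) : sumTwoPow l = l.count 0 % 2 + 2 * sumTwoPow (halve l) := by
  have := sumTwoPow_eq_count_zero_add l
  simp only [sumTwoPow, halve, List.map_append, List.sum_append, List.map_replicate,
    List.sum_replicate, smul_eq_mul] at this ⊢
  omega

lemma length_halve (l : List ℕ) : (halve l).length + (l.count 0 - l.count 0 / 2) = l.length := by
  have := length_filter_ne_zero_add_count l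
  simp only [halve, List.length_append, List.length_replicate, List.length_map]
  omega

/-- `2 ^ (c + k) * m - 2 ^ c` has `k` binary ones; a sum of `n` powers of two has at most `n`. -/
theorem le_length_of_two_pow_dvd (k : ℕ) :
    ∀ (c : ℕ) (l : List ℕ), 2 ^ (c + k) ∣ sumTwoPow l + 2 ^ c → k ≤ l.length := by
  induction k with
  | zero => simp
  | succ k ihk =>
    intro c
    induction c with
    | zero =>
      intro l h
      have h2 : 2 ∣ sumTwoPow l + 1 := (dvd_pow_self 2 k.succ_ne_zero).trans (by simpa using h)
      have hodd : l.count 0 % 2 = 1 := by rw [sumTwoPow_halve] at h2; omega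
      have hcarry : sumTwoPow l + 2 ^ 0 = 2 * (sumTwoPow (halve l) + 2 ^ 0) := by
        rw [sumTwoPow_halve, hodd]; ring
      rw [hcarry, zero_add, pow_succ', Nat.mul_dvd_mul_iff_left two_pos] at h
      have := ihk 0 (halve l) (by simpa using h)
      have := length_halve l
      omega
    | succ c ihc =>
      intro l h
      have h2 : 2 ∣ sumTwoPow l + 2 ^ (c + 1) := (dvd_pow_self 2 (by omega)).trans h
      have heven : l.count 0 % 2 = 0 := by
        rw [sumTwoPow_halve, pow_succ] at h2; omega
      have hcarry : sumTwoPow l + 2 ^ (c + 1) = 2 * (sumTwoPow (halve l) + 2 ^ c) := by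
        rw [sumTwoPow_halve, heven]; ring
      rw [hcarry, show c + 1 + (k + 1) = (c + (k + 1)) + 1 by omega, pow_succ',
        Nat.mul_dvd_mul_iff_left two_pos] at h
      have := ihc (halve l) h
      have := length_halve l
      omega

def dyadicGens : Set ℚ := {x : ℚ | ∃ i : ℕ, 1 ≤ i ∧ x = 1 + 2 ^ (-(i : ℤ))}

noncomputable def dyadicSum (I : List ℕ) : ℚ := (I.map fun i => (2 : ℚ) ^ (-(i : ℤ))).sum

lemma dyadicSum_cons (i : ℕ) (I : List ℕ) :
    dyadicSum (i :: I) = 2 ^ (-(i : ℤ)) + dyadicSum I := rfl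

lemma dyadicSum_nonneg (I : List ℕ) : 0 ≤ dyadicSum I :=
  List.sum_nonneg (by simp only [List.mem_map]; rintro _ ⟨i, -, rfl⟩; positivity)

lemma exists_eq_length_add_dyadicSum {r : ℚ} (hr : r ∈ AddSubmonoid.closure dyadicGens) :
    ∃ I : List ℕ, r = I.length + dyadicSum I := by
  induction hr using AddSubmonoid.closure_induction with
  | mem x hx =>
    obtain ⟨i, -, rfl⟩ := hx
    exact ⟨[i], by simp [dyadicSum]⟩
  | zero => exact ⟨[], by simp [dyadicSum]⟩
  | add x y _ _ hx hy =>
    obtain ⟨I, rfl⟩ := hx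
    obtain ⟨J, rfl⟩ := hy
    exact ⟨I ++ J, by simp [dyadicSum]; ring⟩

lemma cast_sumTwoPow_map_sub_eq_dyadicSum_mul (I : List ℕ) {K : ℕ} (hK : ∀ i ∈ I, i ≤ K) :
    (sumTwoPow (I.map (K - ·)) : ℚ) = dyadicSum I * 2 ^ K := by
  induction I with
  | nil => simp [sumTwoPow, dyadicSum]
  | cons i I ih =>
    have hi : i ≤ K := hK i (by simp)
    have : ((2 : ℚ) ^ (K - i) : ℚ) = 2 ^ (-(i : ℤ)) * 2 ^ K := by
      rw [← zpow_natCast, ← zpow_natCast, ← zpow_add₀ two_ne_zero]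
      congr 1; omega
    rw [List.map_cons, sumTwoPow_cons, dyadicSum_cons, Nat.cast_add, Nat.cast_pow,
      Nat.cast_ofNat, ih (fun j hj => hK j (by simp [hj])), this]
    ring

lemma le_length_of_dyadicSum_add_eq_natCast (I : List ℕ) {k N : ℕ}
    (h : dyadicSum I + 2 ^ (-(k : ℤ)) = N) : k ≤ I.length := by
  set K := k + I.sum
  have hK : ∀ i ∈ I, i ≤ K := fun i hi => (List.le_sum_of_mem hi).trans (by omega)
  have hscaled : ((sumTwoPow (I.map (K - ·)) + 2 ^ (K - k) : ℕ) : ℚ) = ((N * 2 ^ K : ℕ) : ℚ) := by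
    have : ((2 : ℚ) ^ (K - k) : ℚ) = 2 ^ (-(k : ℤ)) * 2 ^ K := by
      rw [← zpow_natCast, ← zpow_natCast, ← zpow_add₀ two_ne_zero]
      congr 1; omega
    push_cast
    rw [cast_sumTwoPow_map_sub_eq_dyadicSum_mul I hK, this, ← h]
    ring
  have hdvd : 2 ^ ((K - k) + k) ∣ sumTwoPow (I.map (K - ·)) + 2 ^ (K - k) := by
    rw [Nat.cast_inj.mp hscaled, show K - k + k = K by omega]
    exact dvd_mul_left _ _
  simpa using le_length_of_two_pow_dvd k (K - k) _ hdvd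

theorem natCast_add_one_sub_notMem_closure {n k : ℕ} (hnk : n < k) :
    (n : ℚ) + 1 - 2 ^ (-(k : ℤ)) ∉ AddSubmonoid.closure dyadicGens := by
  intro hmem
  obtain ⟨I, hI⟩ := exists_eq_length_add_dyadicSum hmem
  have hpos : (0 : ℚ) < 2 ^ (-(k : ℤ)) := by positivity
  have hlen : I.length ≤ n := by
    have := dyadicSum_nonneg I
    by_contra! h
    have : (n : ℚ) + 1 ≤ I.length := by exact_mod_cast h
    linarith
  have : dyadicSum I + 2 ^ (-(k : ℤ)) = ((n - I.length + 1 : ℕ) : ℚ) := by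
    push_cast [hlen]
    linarith
  have := le_length_of_dyadicSum_add_eq_natCast I this
  omega

theorem natCast_add_one_sub_mem_closure (k : ℕ) :
    (k : ℚ) + 1 - 2 ^ (-(k : ℤ)) ∈ AddSubmonoid.closure dyadicGens := by
  induction k with
  | zero => simp
  | succ k ih =>
    have hgen : 1 + (2 : ℚ) ^ (-((k + 1 : ℕ) : ℤ)) ∈ AddSubmonoid.closure dyadicGens :=
      AddSubmonoid.subset_closure ⟨k + 1, by omega, rfl⟩
    convert add_mem ih hgen using 1
    have : (2 : ℚ) ^ (-(k : ℤ)) = 2 * 2 ^ (-((k + 1 : ℕ) : ℤ)) := by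
      rw [← zpow_one_add₀ two_ne_zero]; congr 1; push_cast; ring
    rw [this]; push_cast; ring

section PEValue

variable {q : ℕ}

/-- The unsigned value in `IsPERep` of the digit string `ds` with `k₂` digits after the point. -/
noncomputable def peValue (ds : List (Fin q × Bool × Bool)) (k₂ : ℕ) : ℚ :=
  ∑ j : Fin ds.length,
    ((ds.get j).1 : ℚ) * (q : ℚ) ^ (((ds.length : ℤ) - 1 - (j : ℕ)) - (k₂ : ℤ))

@[simp] lemma peValue_nil (k₂ : ℕ) : peValue ([] : List (Fin q × Bool × Bool)) k₂ = 0 := by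
  simp [peValue]

lemma peValue_cons (d : Fin q × Bool × Bool) (ds : List (Fin q × Bool × Bool)) (k₂ : ℕ) :
    peValue (d :: ds) k₂ = (d.1 : ℚ) * (q : ℚ) ^ ((ds.length : ℤ) - k₂) + peValue ds k₂ := by
  unfold peValue
  erw [Fin.sum_univ_succ]
  simp only [List.length_cons, List.get_eq_getElem, Fin.val_zero, Fin.val_succ,
    List.getElem_cons_zero, List.getElem_cons_succ]
  push_cast
  congr 1
  · ring_nf
  · exact Finset.sum_congr rfl fun j _ => by ring_nf

lemma exists_peValue_eq (ds : List (Fin q × Bool × Bool)) (k₂ : ℕ) :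
    ∃ N : ℕ, N < q ^ ds.length ∧ peValue ds k₂ = N * (q : ℚ) ^ (-(k₂ : ℤ)) := by
  induction ds with
  | nil => exact ⟨0, by simp, by simp⟩
  | cons d ds ih =>
    obtain ⟨N, hN, hval⟩ := ih
    have hq : (q : ℚ) ≠ 0 := by have := d.1.pos; positivity
    refine ⟨d.1 * q ^ ds.length + N, ?_, ?_⟩
    · have := d.1.isLt
      rw [List.length_cons, pow_succ]
      nlinarith
    · rw [peValue_cons, hval, sub_eq_add_neg, zpow_add₀ hq, zpow_natCast]
      push_cast
      ring

lemma peValue_append (D E : List (Fin q × Bool × Bool)) (k₂ : ℕ) :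
    peValue (D ++ E) k₂ = peValue D 0 * (q : ℚ) ^ ((E.length : ℤ) - k₂) + peValue E k₂ := by
  induction D with
  | nil => simp
  | cons d D ih =>
    have hq : (q : ℚ) ≠ 0 := by have := d.1.pos; positivity
    rw [List.cons_append, peValue_cons, ih, peValue_cons, List.length_append, Nat.cast_zero,
      sub_zero, Nat.cast_add, add_sub_assoc, zpow_add₀ hq]
    ring

lemma snd_getElem_append_cons {D F : List (Fin q × Bool × Bool)}
    (hD : ∀ d ∈ D, d.2 = (false, false)) (hF : ∀ d ∈ F, d.2 = (false, false))
    (x : Fin q × Bool × Bool) {j : ℕ} (hj : j < (D ++ x :: F).length) :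
    (D ++ x :: F)[j].2 = if j = D.length then x.2 else (false, false) := by
  rcases lt_trichotomy j D.length with h | rfl | h
  · rw [List.getElem_append_left h, if_neg h.ne]
    exact hD _ (List.getElem_mem h)
  · simp
  · rw [List.getElem_append_right h.le, if_neg h.ne']
    obtain ⟨i, hi⟩ : ∃ i, j - D.length = i + 1 := ⟨j - D.length - 1, by omega⟩
    simp only [hi, List.getElem_cons_succ]
    exact hF _ (List.getElem_mem _)

end PEValue

def digit0 : Fin 2 × Bool × Bool := (0, false, false)

def digit1 : Fin 2 × Bool × Bool := (1, false, false)

def pointDigit : Fin 2 × Bool × Bool := (0, true, true)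

/-- `+D0.1…1` with `k` ones after the point; the units digit `0` carries both markers. -/
def peWord (D : List (Fin 2 × Bool × Bool)) (k : ℕ) : List (PELetter 2) :=
  Sum.inl true :: (D ++ pointDigit :: List.replicate k digit1).map Sum.inr

lemma peValue_replicate_digit0 (n k₂ : ℕ) : peValue (List.replicate n digit0) k₂ = 0 := by
  induction n with
  | zero => simp
  | succ n ih => rw [List.replicate_succ, peValue_cons, ih]; simp [digit0]

lemma peValue_replicate_digit1 (k k₂ : ℕ) :
    peValue (List.replicate k digit1) k₂ = (2 ^ k - 1) * 2 ^ (-(k₂ : ℤ)) := by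
  induction k with
  | zero => simp
  | succ k ih =>
    rw [List.replicate_succ, peValue_cons, ih, List.length_replicate, Nat.cast_ofNat,
      sub_eq_add_neg, zpow_add₀ two_ne_zero, zpow_natCast]
    simp only [digit1, Fin.isValue, Fin.val_one, Nat.cast_one]
    ring

lemma peValue_peWord_digits (D : List (Fin 2 × Bool × Bool)) (k : ℕ) :
    peValue (D ++ pointDigit :: List.replicate k digit1) k =
      2 * peValue D 0 + 1 - 2 ^ (-(k : ℤ)) := by
  rw [peValue_append, peValue_cons, peValue_replicate_digit1, List.length_cons,
    List.length_replicate, Nat.cast_ofNat]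
  have : (2 : ℚ) ^ (-(k : ℤ)) * 2 ^ k = 1 := by
    rw [← zpow_natCast, ← zpow_add₀ two_ne_zero]; simp
  simp only [pointDigit, Fin.isValue, Fin.val_zero, Nat.cast_zero, zero_mul, zero_add]
  rw [show ((k + 1 : ℕ) : ℤ) - k = 1 by push_cast; ring, zpow_one]
  linear_combination this

theorem isPERep_peWord_iff {D : List (Fin 2 × Bool × Bool)} (hD : ∀ d ∈ D, d.2 = (false, false))
    (k : ℕ) (M : GL (Fin 2) ℚ) :
    IsPERep 2 M (peWord D k) ↔
      (M : Matrix (Fin 2) (Fin 2) ℚ) = !![1, 2 * peValue D 0 + 1 - 2 ^ (-(k : ℤ)); 0, 1] := by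
  set ds := D ++ pointDigit :: List.replicate k digit1
  have hlen : ds.length = D.length + k + 1 := by simp [ds]; ring
  have hmarks (j : ℕ) (hj : j < ds.length) :
      ds[j].2 = if j = D.length then (true, true) else (false, false) :=
    snd_getElem_append_cons hD (by simp [List.mem_replicate, digit1]) pointDigit hj
  have hDlt : D.length < ds.length := by omega
  constructor
  · rintro ⟨ε, ds', hw, -, m, r, k₂, hk₂, hM, hradix, -, hcursor, hr⟩
    obtain ⟨hε, hds'⟩ := List.cons_eq_cons.mp hw
    obtain rfl : true = ε := Sum.inl_injective hε
    obtain rfl : ds = ds' := List.map_injective_iff.mpr Sum.inr_injective hds'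
    have hk₂ : k₂ = k := by
      have := (hradix ⟨D.length, hDlt⟩).1 (by simp [hmarks])
      simp only at this
      omega
    have hm : m = 0 := by
      have := hcursor ⟨D.length, hDlt⟩ (by simp [hmarks])
      simp only at this
      omega
    change _ * peValue ds k₂ = r at hr
    rw [hM, ← hr, hm, hk₂, peValue_peWord_digits]
    simp
  · intro hM
    refine ⟨true, ds, rfl, by simp [ds], 0, _, k, by omega, by simpa using hM, ?_, ?_, ?_,
      (one_mul _).trans (peValue_peWord_digits D k)⟩
    · intro j
      simp only [List.get_eq_getElem, hmarks]
      split_ifs <;> simp <;> omega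
    · refine ⟨⟨D.length, hDlt⟩, by simp [hmarks], fun j hj => Fin.ext ?_⟩
      simp only [List.get_eq_getElem, hmarks] at hj
      split_ifs at hj with h
      exact h
    · intro j hj
      simp only [List.get_eq_getElem, hmarks] at hj
      split_ifs at hj with h
      omega

lemma peWord_eq_append (D : List (Fin 2 × Bool × Bool)) (k : ℕ) :
    peWord D k = (Sum.inl true :: D.map Sum.inr) ++
      (pointDigit :: List.replicate k digit1).map Sum.inr :=
  congrArg (List.cons _) (List.map_append ..)

lemma not_isPERep_map_inr {q : ℕ} (M : GL (Fin 2) ℚ) (l : List (Fin q × Bool × Bool)) :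
    ¬ IsPERep q M (l.map Sum.inr) := by
  rintro ⟨ε, ds, hw, -⟩
  cases l with
  | nil => exact List.cons_ne_nil _ _ hw.symm
  | cons d l => exact Sum.inr_ne_inl (List.cons_eq_cons.mp hw).1

theorem not_isPERep_peWord {D : List (Fin 2 × Bool × Bool)} (hD : ∀ d ∈ D, d.2 = (false, false))
    {k : ℕ} (hk : 2 ^ (D.length + 1) ≤ k) {M : GL (Fin 2) ℚ} {r : ℚ}
    (hr : r ∈ AddSubmonoid.closure dyadicGens)
    (hM : (M : Matrix (Fin 2) (Fin 2) ℚ) = !![1, r; 0, 1]) :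
    ¬ IsPERep 2 M (peWord D k) := by
  rw [isPERep_peWord_iff hD, hM]
  intro h
  obtain ⟨N, hN, hval⟩ := exists_peValue_eq D 0
  have hr' : r = 2 * peValue D 0 + 1 - 2 ^ (-(k : ℤ)) := by
    simpa using congrFun (congrFun h 0) 1
  rw [hval, Nat.cast_ofNat, Nat.cast_zero, neg_zero, zpow_zero, mul_one] at hr'
  have h2N : 2 * N < k := by rw [pow_succ] at hk; omega
  exact natCast_add_one_sub_notMem_closure h2N (by exact_mod_cast hr' ▸ hr)

lemma le_of_natCast_eq_mul_two_pow {k k₂ N : ℕ}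
    (h : (N : ℚ) = ((k : ℚ) + 1 - 2 ^ (-(k : ℤ))) * 2 ^ k₂) : k ≤ k₂ := by
  by_contra! hlt
  have hfrac : (((((k + 1) * 2 ^ k₂ : ℕ) : ℤ) - N : ℤ) : ℚ) = 2 ^ ((k₂ : ℤ) - k) := by
    rw [sub_eq_neg_add (k₂ : ℤ) k, zpow_add₀ two_ne_zero, zpow_natCast]
    push_cast
    rw [h]
    ring
  have hpos : (0 : ℚ) < 2 ^ ((k₂ : ℤ) - k) := by positivity
  have hlt1 : (2 : ℚ) ^ ((k₂ : ℤ) - k) < 1 := zpow_lt_one_of_neg₀ one_lt_two (by omega)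
  rw [← hfrac] at hpos hlt1
  have : (0 : ℤ) < ((k + 1) * 2 ^ k₂ : ℕ) - N := by exact_mod_cast hpos
  have : ((k + 1) * 2 ^ k₂ : ℕ) - (N : ℤ) < 1 := by exact_mod_cast hlt1
  omega

/-- Besides the sign, such a word needs `k` digits after the point and `s + 1` before it. -/
theorem add_le_length_of_isPERep {M : GL (Fin 2) ℚ} {w : List (PELetter 2)} (hw : IsPERep 2 M w)
    {k s : ℕ} (hM : (M : Matrix (Fin 2) (Fin 2) ℚ) 0 1 = (k : ℚ) + 1 - 2 ^ (-(k : ℤ)))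
    (hk : 2 ^ s ≤ k) : s + k + 2 ≤ w.length := by
  obtain ⟨ε, ds, rfl, -, m, r, k₂, -, hM', -, -, -, hr⟩ := hw
  change _ * peValue ds k₂ = r at hr
  obtain ⟨N, hN, hval⟩ := exists_peValue_eq ds k₂
  rw [hval, Nat.cast_ofNat] at hr
  have hrM : r = (k : ℚ) + 1 - 2 ^ (-(k : ℤ)) := by simpa [hM'] using hM
  have h2k : (2 : ℚ) ^ (-(k : ℤ)) ≤ 1 := zpow_le_one_of_nonpos₀ one_le_two (by omega)
  have hsr : (2 : ℚ) ^ s ≤ r := by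
    rw [hrM]
    have : ((2 ^ s : ℕ) : ℚ) ≤ k := by exact_mod_cast hk
    push_cast at this
    linarith
  have hNr : (N : ℚ) = r * 2 ^ k₂ := by
    cases ε
    · have : (0 : ℚ) ≤ N * 2 ^ (-(k₂ : ℤ)) := by positivity
      have : (0 : ℚ) < 2 ^ s := by positivity
      simp only [Bool.false_eq_true, if_false] at hr
      linarith
    · rw [← hr, if_pos rfl, one_mul, mul_assoc, ← zpow_natCast, ← zpow_add₀ two_ne_zero]
      simp
  have hkk₂ : k ≤ k₂ := le_of_natCast_eq_mul_two_pow (hrM ▸ hNr)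
  have hsN : 2 ^ (s + k₂) ≤ N := by
    have : (2 : ℚ) ^ s * 2 ^ k₂ ≤ r * 2 ^ k₂ := by gcongr
    rw [← hNr, ← pow_add] at this
    exact_mod_cast this
  have := (Nat.pow_lt_pow_iff_right one_lt_two).mp (hsN.trans_lt hN)
  simp only [List.length_cons, List.length_map]
  omega

lemma length_peWord (D : List (Fin 2 × Bool × Bool)) (k : ℕ) :
    (peWord D k).length = D.length + k + 2 := by
  simp [peWord]
  omega

lemma snd_eq_of_mem_digit1_cons_replicate_digit0 (n : ℕ) :
    ∀ d ∈ digit1 :: List.replicate n digit0, d.2 = (false, false) := by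
  simp [List.mem_replicate, digit0, digit1]

lemma peValue_digit1_cons_replicate_digit0 (n : ℕ) :
    peValue (digit1 :: List.replicate n digit0) 0 = 2 ^ n := by
  rw [peValue_cons, peValue_replicate_digit0, List.length_replicate]
  simp [digit1]

noncomputable def unipotent (r : ℚ) : GL (Fin 2) ℚ :=
  Matrix.GeneralLinearGroup.mkOfDetNeZero !![1, r; 0, 1] (by simp [Matrix.det_fin_two_of])

/-- With `k = 2 ^ (n + 1)`, the pointed expansion of `k + 1 - 2 ^ (-k)` is `+10…0.1…1`
(`n` zeros, then the units digit, then `k` ones). -/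
theorem isPE_peWord_digit1_cons_replicate_digit0 (n : ℕ) :
    IsPE 2 (unipotent ((2 ^ (n + 1) : ℕ) + 1 - 2 ^ (-((2 ^ (n + 1) : ℕ) : ℤ))))
      (peWord (digit1 :: List.replicate n digit0) (2 ^ (n + 1))) := by
  refine ⟨(isPERep_peWord_iff (snd_eq_of_mem_digit1_cons_replicate_digit0 n) _ _).2 ?_,
    fun w hw => ?_⟩
  · rw [peValue_digit1_cons_replicate_digit0]
    simp [unipotent, pow_succ]
    ring
  · have := add_le_length_of_isPERep (k := 2 ^ (n + 1)) (s := n + 1) hw (by simp [unipotent]) le_rfl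
    rw [length_peWord, List.length_cons, List.length_replicate]
    omega

lemma exists_sublist_of_append_eq {α : Type*} {a b c H T : List α} (h : a ++ b ++ c = H ++ T)
    (hab : a.length + b.length ≤ H.length) :
    ∃ H', H'.Sublist H ∧ H'.length + b.length = H.length ∧ a ++ c = H' ++ T := by
  obtain ⟨H₂, rfl, rfl⟩ : ∃ H₂, H = a ++ b ++ H₂ ∧ c = H₂ ++ T := by
    rcases List.append_eq_append_iff.mp h with ⟨H₂, hH, hc⟩ | ⟨c', habH, hT⟩
    · exact ⟨H₂, hH, hc⟩
    · obtain rfl : c' = [] := by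
        have := congrArg List.length habH
        simp only [List.length_append] at this
        exact List.eq_nil_of_length_eq_zero (by omega)
      exact ⟨[], by simpa using habH.symm, by simpa using hT.symm⟩
  refine ⟨a ++ H₂, ?_, by simp; omega, by simp⟩
  rw [List.append_assoc]
  exact (List.sublist_append_right b H₂).append_left a

theorem exists_map_inr_or_peWord_of_peWord_eq {E : List (Fin 2 × Bool × Bool)} {k : ℕ}
    {a b c : List (PELetter 2)} (h : peWord E k = a ++ b ++ c)
    (hab : a.length + b.length ≤ E.length + 1) (hb : b ≠ []) :
    (∃ l : List (Fin 2 × Bool × Bool), a ++ c = l.map Sum.inr) ∨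
      ∃ D, D.Sublist E ∧ D.length < E.length ∧ a ++ c = peWord D k := by
  rw [peWord_eq_append] at h
  obtain ⟨H, hH, hHlen, hac⟩ := exists_sublist_of_append_eq h.symm (by simpa using hab)
  rcases List.sublist_cons_iff.mp hH with hH | ⟨H', rfl, hH'⟩
  · obtain ⟨l, -, rfl⟩ := List.sublist_map_iff.mp hH
    exact Or.inl ⟨_, hac.trans (List.map_append ..).symm⟩
  · obtain ⟨D, hDE, rfl⟩ := List.sublist_map_iff.mp hH'
    refine Or.inr ⟨D, hDE, ?_, by rw [hac, peWord_eq_append]⟩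
    have := List.length_pos_iff.mpr hb
    simp only [List.length_cons, List.length_map] at hHlen
    omega

end BSSubmonoid

open BSSubmonoid in
/-- The subset of `BS(1,2)` corresponding to the submonoid of `ℚ` generated by the
numbers `1 + 2^(-i)`, `i ≥ 1`, is not PE-regular. -/
theorem submonoid_not_isPERegular :
    ¬ IsPERegular 2 {M : GL (Fin 2) ℚ |
      ∃ r ∈ AddSubmonoid.closure {x : ℚ | ∃ i : ℕ, 1 ≤ i ∧ x = 1 + 2 ^ (-(i : ℤ))},
        (M : Matrix (Fin 2) (Fin 2) ℚ) = !![1, r; 0, 1]} := by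
  rintro ⟨σ, _, A, hA⟩
  set n := Fintype.card σ
  have hw : peWord (digit1 :: List.replicate n digit0) (2 ^ (n + 1)) ∈ A.accepts := by
    rw [hA]
    exact ⟨_, ⟨_, natCast_add_one_sub_mem_closure _, rfl⟩,
      isPE_peWord_digit1_cons_replicate_digit0 n⟩
  obtain ⟨a, b, c, habc, hab, hb, hpump⟩ :=
    A.pumping_lemma hw (by
      rw [length_peWord]; exact Nat.le_add_right_of_le (Nat.le_add_right_of_le (by simp [n])))
  have hac : a ++ c ∈ A.accepts := hpump <| Language.mem_mul.mpr
    ⟨a, Language.mem_mul.mpr ⟨a, rfl, [], Language.nil_mem_kstar _, a.append_nil⟩, c, rfl, rfl⟩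
  rw [hA] at hac
  obtain ⟨M, ⟨r, hr, hM⟩, hMac, -⟩ := hac
  rcases exists_map_inr_or_peWord_of_peWord_eq habc (by simp [n]; omega) hb with
    ⟨l, hl⟩ | ⟨D, hDE, hDlen, hD⟩
  · exact not_isPERep_map_inr M l (hl ▸ hMac)
  · refine not_isPERep_peWord (fun d hd => ?_) ?_ hr hM (hD ▸ hMac)
    · exact snd_eq_of_mem_digit1_cons_replicate_digit0 n d (hDE.subset hd)
    · exact Nat.pow_le_pow_right two_pos (by simpa using hDlen)
end

section
/- Bounded precision for rational subsets with cursor at the origin: let q ≥ 2 be an integer and let R be a rational subset of BS(1,q) such that every M ∈ R has top-left matrix entry equal to 1 (i.e., (M : Matrix (Fin 2) (Fin 2) ℚ) 0 0 = 1). Then there exists k : ℕ such that for every M ∈ R, the rational number q^k * ((M : Matrix (Fin 2) (Fin 2) ℚ) 0 1) is an integer (lies in the range of the coercion ℤ → ℚ). -/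
open Matrix

/-- `R` is a rational subset of `BS(1,q)`. -/
def IsRationalSubset (q : ℕ) (hq : 2 ≤ q) (R : Set (GL (Fin 2) ℚ)) : Prop :=
  ∃ (ι : Type) (_ : Fintype ι) (L : Language ι) (f : ι → GL (Fin 2) ℚ),
    L.IsRegular ∧ (∀ i : ι, f i ∈ BS q hq) ∧
    R = {g : GL (Fin 2) ℚ | ∃ w ∈ L, (w.map f).prod = g}


/-!
Every element of `BS(1,q)` is an affine matrix `!![q ^ m, x; 0, 1]` with `x ∈ ℤ[1/q]`, and the
top-right entry of a product of such matrices is `∑ⱼ q ^ hⱼ * xⱼ`, where the heights `hⱼ` are the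
prefix sums of the exponents `m`. So it suffices to bound the heights of prefixes of accepted words
from below. The cursor condition says that every accepted word has total height `0`; deleting the
segment between two prefixes that reach the same DFA state shows that the height of a prefix only
depends on that state. Heights drop by at most `C` per letter, so a prefix of height below
`-|σ| * C` would pass through `|σ| + 1` disjoint windows `[-(s + 1) * C, -s * C)` at prefixes
reaching pairwise distinct states.
-/

/-- Rationals with at most `k` fractional digits in base `q`, i.e. `q ^ k * x ∈ ℤ`. -/
def boundedPrecision (q : ℕ) (k : ℤ) : AddSubgroup ℚ :=
  (Int.castAddHom ℚ).range.comap (AddMonoidHom.mulLeft ((q : ℚ) ^ k))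

section boundedPrecision

variable {q : ℕ} {k : ℤ} {x : ℚ}

theorem mem_boundedPrecision : x ∈ boundedPrecision q k ↔ ∃ n : ℤ, (q : ℚ) ^ k * x = n := by
  simp only [boundedPrecision, AddSubgroup.mem_comap, AddMonoidHom.mem_range, Int.coe_castAddHom,
    AddMonoidHom.coe_mulLeft, eq_comm]

variable [NeZero q]

theorem boundedPrecision_mono : Monotone (boundedPrecision q) := by
  intro k l hkl x hx
  obtain ⟨n, hn⟩ := mem_boundedPrecision.1 hx
  refine mem_boundedPrecision.2 ⟨q ^ (l - k).toNat * n, ?_⟩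
  have hq : (q : ℚ) ≠ 0 := Nat.cast_ne_zero.2 (NeZero.ne q)
  calc (q : ℚ) ^ l * x = (q : ℚ) ^ (l - k) * ((q : ℚ) ^ k * x) := by
        rw [← mul_assoc, ← zpow_add₀ hq, sub_add_cancel]
    _ = _ := by
        rw [hn, ← Int.toNat_of_nonneg (sub_nonneg.2 hkl), zpow_natCast]
        push_cast
        rfl

theorem zpow_mul_mem_boundedPrecision (m : ℤ) (hx : x ∈ boundedPrecision q (k + m)) :
    (q : ℚ) ^ m * x ∈ boundedPrecision q k := by
  obtain ⟨n, hn⟩ := mem_boundedPrecision.1 hx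
  have hq : (q : ℚ) ≠ 0 := Nat.cast_ne_zero.2 (NeZero.ne q)
  exact mem_boundedPrecision.2 ⟨n, by rw [← mul_assoc, ← zpow_add₀ hq, hn]⟩

end boundedPrecision

def affineMatrix (u x : ℚ) : Matrix (Fin 2) (Fin 2) ℚ :=
  !![u, x; 0, 1]

@[simp]
theorem affineMatrix_apply_zero_zero (u x : ℚ) : affineMatrix u x 0 0 = u := rfl

@[simp]
theorem affineMatrix_apply_zero_one (u x : ℚ) : affineMatrix u x 0 1 = x := rfl

theorem affineMatrix_one_zero : affineMatrix 1 0 = 1 :=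
  (Matrix.one_fin_two).symm

theorem affineMatrix_mul (u x v y : ℚ) :
    affineMatrix u x * affineMatrix v y = affineMatrix (u * v) (u * y + x) := by
  simp [affineMatrix]

def affineSubgroup (q : ℕ) [NeZero q] : Subgroup (GL (Fin 2) ℚ) where
  carrier := {g | ∃ (m : ℤ) (x : ℚ) (k : ℤ),
    (g : Matrix (Fin 2) (Fin 2) ℚ) = affineMatrix ((q : ℚ) ^ m) x ∧ x ∈ boundedPrecision q k}
  one_mem' := ⟨0, 0, 0, by simp [affineMatrix_one_zero], zero_mem _⟩
  mul_mem' := by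
    rintro g h ⟨m, x, k, hg, hx⟩ ⟨m', x', k', hh, hx'⟩
    have hq : (q : ℚ) ≠ 0 := Nat.cast_ne_zero.2 (NeZero.ne q)
    refine ⟨m + m', (q : ℚ) ^ m * x' + x, max k (k' - m), ?_, add_mem ?_ ?_⟩
    · rw [Units.val_mul, hg, hh, affineMatrix_mul, zpow_add₀ hq]
    · exact zpow_mul_mem_boundedPrecision m
        (boundedPrecision_mono (by omega) hx')
    · exact boundedPrecision_mono (le_max_left _ _) hx
  inv_mem' := by
    rintro g ⟨m, x, k, hg, hx⟩
    have hq : (q : ℚ) ≠ 0 := Nat.cast_ne_zero.2 (NeZero.ne q)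
    refine ⟨-m, -((q : ℚ) ^ (-m) * x), k + m, ?_, neg_mem ?_⟩
    · rw [Matrix.coe_units_inv, hg]
      apply Matrix.inv_eq_left_inv
      rw [affineMatrix_mul, ← zpow_add₀ hq, neg_add_cancel, zpow_zero, add_neg_cancel,
        affineMatrix_one_zero]
    · exact zpow_mul_mem_boundedPrecision (-m) (by rwa [add_neg_cancel_right])

theorem mem_affineSubgroup {q : ℕ} [NeZero q] {g : GL (Fin 2) ℚ} :
    g ∈ affineSubgroup q ↔ ∃ (m : ℤ) (x : ℚ) (k : ℤ),
      (g : Matrix (Fin 2) (Fin 2) ℚ) = affineMatrix ((q : ℚ) ^ m) x ∧ x ∈ boundedPrecision q k :=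
  Iff.rfl

theorem BS_le_affineSubgroup {q : ℕ} [NeZero q] (hq : 2 ≤ q) : BS q hq ≤ affineSubgroup q := by
  refine (Subgroup.closure_le _).2 ?_
  rintro g (rfl | rfl)
  · exact ⟨0, 1, 0, by simp [aElem, affineMatrix], mem_boundedPrecision.2 ⟨1, by simp⟩⟩
  · exact ⟨1, 0, 0, by simp [tElem, affineMatrix], zero_mem _⟩

theorem exists_list_prod_eq_affineMatrix {q : ℕ} [NeZero q] {ι : Type*}
    {f : ι → GL (Fin 2) ℚ} {m : ι → ℤ} {x : ι → ℚ} {K : ℤ}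
    (hf : ∀ i, (f i : Matrix (Fin 2) (Fin 2) ℚ) = affineMatrix ((q : ℚ) ^ m i) (x i))
    (hx : ∀ i, x i ∈ boundedPrecision q K) (w : List ι) :
    ∃ y, ((w.map f).prod : Matrix (Fin 2) (Fin 2) ℚ) = affineMatrix ((q : ℚ) ^ (w.map m).sum) y ∧
      ∀ B : ℤ, (∀ j, -B ≤ ((w.take j).map m).sum) → y ∈ boundedPrecision q (B + K) := by
  induction w with
  | nil => exact ⟨0, by simp [affineMatrix_one_zero], fun _ _ => zero_mem _⟩
  | cons i w ih =>
    obtain ⟨y, hy, hyB⟩ := ih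
    have hq : (q : ℚ) ≠ 0 := Nat.cast_ne_zero.2 (NeZero.ne q)
    refine ⟨(q : ℚ) ^ m i * y + x i, ?_, fun B hB => add_mem ?_ ?_⟩
    · rw [List.map_cons, List.prod_cons, Units.val_mul, hf, hy, affineMatrix_mul, List.map_cons,
        List.sum_cons, zpow_add₀ hq]
    · refine zpow_mul_mem_boundedPrecision (m i) ?_
      rw [add_right_comm]
      refine hyB _ fun j => ?_
      have := hB (j + 1)
      simp only [List.take_succ_cons, List.map_cons, List.sum_cons] at this
      omega
    · have := hB 0
      simp only [List.take_zero, List.map_nil, List.sum_nil, Left.neg_nonpos_iff] at this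
      exact boundedPrecision_mono (by omega) (hx i)

theorem exists_mem_Ico_of_sub_le_succ {S : ℕ → ℤ} {C : ℤ} (hstep : ∀ i, S i - C ≤ S (i + 1))
    {t : ℤ} (h0 : t ≤ S 0) {j : ℕ} (hj : S j < t) : ∃ i, S i ∈ Set.Ico (t - C) t := by
  induction j with
  | zero => omega
  | succ j ih =>
    by_cases h : S j < t
    · exact ih h
    · exact ⟨j + 1, by linarith [hstep j], hj⟩

theorem List.sum_map_take_sub_le_succ {α : Type*} {m : α → ℤ} {C : ℕ} (hC : ∀ a, -(C : ℤ) ≤ m a)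
    (w : List α) (i : ℕ) : ((w.take i).map m).sum - C ≤ ((w.take (i + 1)).map m).sum := by
  rw [List.take_add_one, List.map_append, List.sum_append]
  cases w[i]? with
  | none => simp
  | some a => simpa [sub_eq_add_neg] using hC a

namespace DFA

variable {α σ : Type*} {M : DFA α σ} {w : List α}

theorem take_append_drop_mem_accepts (hw : w ∈ M.accepts) {a b : ℕ}
    (h : M.eval (w.take a) = M.eval (w.take b)) : w.take a ++ w.drop b ∈ M.accepts := by
  have : M.eval (w.take a ++ w.drop b) = M.eval w := by
    rw [eval, evalFrom_of_append, ← eval, h, eval, ← evalFrom_of_append, List.take_append_drop]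
  rwa [mem_accepts, this]

theorem sum_map_take_eq_of_eval_take_eq {G : Type*} [AddRightCancelMonoid G] {m : α → G}
    (hzero : ∀ v ∈ M.accepts, (v.map m).sum = 0) (hw : w ∈ M.accepts) {a b : ℕ}
    (h : M.eval (w.take a) = M.eval (w.take b)) :
    ((w.take a).map m).sum = ((w.take b).map m).sum := by
  have ha := hzero _ (take_append_drop_mem_accepts hw h)
  have hb := hzero w hw
  rw [← List.take_append_drop b w, List.map_append, List.sum_append] at hb
  rw [List.map_append, List.sum_append, ← hb] at ha
  exact add_right_cancel ha

theorem neg_card_mul_le_sum_map_take [Fintype σ] {m : α → ℤ} {C : ℕ} (hC : ∀ a, -(C : ℤ) ≤ m a)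
    (hzero : ∀ v ∈ M.accepts, (v.map m).sum = 0) (hw : w ∈ M.accepts) (j : ℕ) :
    -(Fintype.card σ * C : ℤ) ≤ ((w.take j).map m).sum := by
  set S : ℕ → ℤ := fun i => ((w.take i).map m).sum with hS
  by_contra! hj
  have hstep : ∀ i, S i - C ≤ S (i + 1) := List.sum_map_take_sub_le_succ hC w
  have hlevel (s : Fin (Fintype.card σ + 1)) :
      ∃ i, S i ∈ Set.Ico (-((s : ℕ) * C : ℤ) - C) (-((s : ℕ) * C : ℤ)) := by
    have hS0 : -((s : ℕ) * C : ℤ) ≤ S 0 := by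
      simp only [hS, List.take_zero, List.map_nil, List.sum_nil, neg_nonpos]
      positivity
    refine exists_mem_Ico_of_sub_le_succ hstep hS0 (hj.trans_le ?_)
    have := s.is_le
    gcongr
  choose i hi using hlevel
  have hanti : StrictAnti fun s => S (i s) := by
    intro s s' hss'
    have : ((s : ℕ) + 1 : ℤ) * C ≤ (s' : ℕ) * C := by gcongr; exact_mod_cast hss'
    linarith [(hi s).1, (hi s').2]
  have hinj : Function.Injective fun s => M.eval (w.take (i s)) :=
    fun s s' h => hanti.injective (sum_map_take_eq_of_eval_take_eq hzero hw h)
  simpa using Fintype.card_le_of_injective _ hinj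

end DFA

/-- Bounded precision: if all elements of a rational subset of `BS(1,q)` have cursor
at the origin, then the precision of their fractional part is bounded. -/
theorem rational_subset_bounded_precision (q : ℕ) (hq : 2 ≤ q) (R : Set (GL (Fin 2) ℚ))
    (hR : IsRationalSubset q hq R)
    (hcursor : ∀ M ∈ R, (M : Matrix (Fin 2) (Fin 2) ℚ) 0 0 = 1) :
    ∃ k : ℕ, ∀ M ∈ R, ∃ n : ℤ,
      (q : ℚ) ^ k * ((M : Matrix (Fin 2) (Fin 2) ℚ) 0 1) = (n : ℚ) := by
  obtain ⟨ι, _, L, f, ⟨σ, _, M, rfl⟩, hf, rfl⟩ := hR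
  have : NeZero q := ⟨by omega⟩
  choose m x k hfx hxk using fun i => mem_affineSubgroup.1 (BS_le_affineSubgroup hq (hf i))
  obtain ⟨K, hK⟩ := Finite.bddAbove_range k
  obtain ⟨c, hc⟩ := Finite.bddBelow_range m
  have hprod := exists_list_prod_eq_affineMatrix hfx
    fun i => boundedPrecision_mono (hK ⟨i, rfl⟩) (hxk i)
  have hzero : ∀ w ∈ M.accepts, (w.map m).sum = 0 := by
    intro w hw
    obtain ⟨y, hy, -⟩ := hprod w
    have h00 := hcursor _ ⟨w, hw, rfl⟩
    rw [hy, affineMatrix_apply_zero_zero] at h00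
    exact (zpow_eq_one_iff_right₀ (by positivity) (by norm_cast; omega)).1 h00
  have hC : ∀ i, -((-c).toNat : ℤ) ≤ m i := fun i => by have := hc ⟨i, rfl⟩; omega
  refine ⟨(Fintype.card σ * (-c).toNat + K).toNat, ?_⟩
  rintro _ ⟨w, hw, rfl⟩
  obtain ⟨y, hy, hyB⟩ := hprod w
  have hy' := hyB _ (DFA.neg_card_mul_le_sum_map_take hC hzero hw)
  rw [hy, affineMatrix_apply_zero_one, ← zpow_natCast, ← mem_boundedPrecision]
  exact boundedPrecision_mono (Int.self_le_toNat _) hy'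
end

section
/- State evaluations for trim automata accepting only the identity: let G be a group and (Q, E, q₀, q_f) a trim automaton over G whose accepted set equals {1}. Then there exists a map η : Q → G such that η q₀ = 1 and for every edge (p, g, p') ∈ E, η p' = (η p) * g. -/
/-- `ρ` is a run from `p` to `p'` with production `g` in the automaton over the group `G`
with edge set `E`: a (possibly empty) chain of edges from `E` starting at `p`, ending at
`p'`, whose labels multiply to `g`. -/
def IsRun {Q G : Type*} [Monoid G] (E : Set (Q × G × Q)) (p p' : Q) (g : G)
    (ρ : List (Q × G × Q)) : Prop :=
  (∀ e ∈ ρ, e ∈ E) ∧ ρ.Chain' (fun e f => e.2.2 = f.1) ∧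
  (ρ.map fun e => e.2.1).prod = g ∧
  (ρ = [] → p = p') ∧
  (∀ h : ρ ≠ [], (ρ.head h).1 = p ∧ (ρ.getLast h).2.2 = p')

/-!
Right-cancel a common continuation to the final state: two runs from `q₀` to `s` followed by one
run from `s` to `q_f` give two accepted productions `g h` and `g' h`, both equal to `1`, so
`g = g'`. Hence the production of a run from `q₀` to `s` depends only on `s`; it is `η s`.
-/

namespace IsRun

variable {Q G : Type*} [Monoid G] {E : Set (Q × G × Q)}

theorem nil (E : Set (Q × G × Q)) (p : Q) : IsRun E p p 1 [] :=
  ⟨by simp, List.isChain_nil, by simp, fun _ => rfl, fun h => absurd rfl h⟩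

theorem singleton {e : Q × G × Q} (he : e ∈ E) : IsRun E e.1 e.2.2 e.2.1 [e] :=
  ⟨by simpa, List.isChain_singleton _, by simp, by simp, fun _ => ⟨rfl, rfl⟩⟩

theorem append {p p' p'' : Q} {g h : G} {ρ σ : List (Q × G × Q)}
    (hρ : IsRun E p p' g ρ) (hσ : IsRun E p' p'' h σ) :
    IsRun E p p'' (g * h) (ρ ++ σ) := by
  obtain ⟨memρ, chainρ, rfl, nilρ, endsρ⟩ := hρ
  obtain ⟨memσ, chainσ, rfl, nilσ, endsσ⟩ := hσ
  rcases eq_or_ne ρ [] with rfl | hρ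
  · obtain rfl := nilρ rfl
    simpa using ⟨memσ, chainσ, rfl, nilσ, endsσ⟩
  rcases eq_or_ne σ [] with rfl | hσ
  · obtain rfl := nilσ rfl
    simpa using ⟨memρ, chainρ, rfl, nilρ, endsρ⟩
  refine ⟨?_, ?_, by simp, fun h => absurd h (by simp [hρ]), fun _ => ⟨?_, ?_⟩⟩
  · exact fun e he => (List.mem_append.1 he).elim (memρ e) (memσ e)
  · refine List.isChain_append.2 ⟨chainρ, chainσ, ?_⟩
    simp only [List.getLast?_eq_some_getLast hρ, List.head?_eq_some_head hσ, Option.mem_def,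
      Option.some.injEq]
    rintro _ rfl _ rfl
    rw [(endsρ hρ).2, (endsσ hσ).1]
  · rw [List.head_append_of_ne_nil]
    exact (endsρ hρ).1
  · rw [List.getLast_append_of_ne_nil _ hσ]
    exact (endsσ hσ).2

theorem production_eq [IsRightCancelMul G] {q₀ q_f s : Q} {g g' : G} {ρ ρ' : List (Q × G × Q)}
    (hacc : {g : G | ∃ ρ, IsRun E q₀ q_f g ρ}.Subsingleton)
    (hs : ∃ (h : G) (σ : List (Q × G × Q)), IsRun E s q_f h σ)
    (hρ : IsRun E q₀ s g ρ) (hρ' : IsRun E q₀ s g' ρ') : g = g' := by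
  obtain ⟨h, σ, hσ⟩ := hs
  exact mul_right_cancel (hacc ⟨_, hρ.append hσ⟩ ⟨_, hρ'.append hσ⟩)

end IsRun

theorem exists_state_evaluation_of_production_eq {Q G : Type*} [Monoid G]
    {E : Set (Q × G × Q)} {q₀ : Q}
    (reach : ∀ s : Q, ∃ (g : G) (ρ : List (Q × G × Q)), IsRun E q₀ s g ρ)
    (uniq : ∀ {s : Q} {g g' : G} {ρ ρ' : List (Q × G × Q)},
      IsRun E q₀ s g ρ → IsRun E q₀ s g' ρ' → g = g') :
    ∃ η : Q → G, η q₀ = 1 ∧ ∀ e ∈ E, η e.2.2 = η e.1 * e.2.1 := by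
  choose η ρ hρ using reach
  exact ⟨η, uniq (hρ q₀) (IsRun.nil E q₀),
    fun e he => uniq (hρ e.2.2) ((hρ e.1).append (IsRun.singleton he))⟩

theorem trim_automaton_accepting_one_has_state_evaluation_general
    {G : Type*} [Group G] (Q : Type*)
    (E : Set (Q × G × Q)) (q0 qf : Q)
    (trim : ∀ s : Q, (∃ (g : G) (ρ : List (Q × G × Q)), IsRun E q0 s g ρ) ∧
                     (∃ (g : G) (ρ : List (Q × G × Q)), IsRun E s qf g ρ))
    (hacc : {g : G | ∃ ρ : List (Q × G × Q), IsRun E q0 qf g ρ} = {1}) :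
    ∃ η : Q → G, η q0 = 1 ∧ ∀ e ∈ E, η e.2.2 = η e.1 * e.2.1 :=
  exists_state_evaluation_of_production_eq (fun s => (trim s).1)
    fun {s} _ _ _ _ => IsRun.production_eq (hacc ▸ Set.subsingleton_singleton) (trim s).2

/-- A trim automaton over a group `G` accepting exactly `{1}` admits a state
evaluation. -/
theorem trim_automaton_accepting_one_has_state_evaluation
    {G : Type*} [Group G] (Q : Type*) [Fintype Q]
    (E : Set (Q × G × Q)) (q0 qf : Q)
    (trim : ∀ s : Q, (∃ (g : G) (ρ : List (Q × G × Q)), IsRun E q0 s g ρ) ∧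
                     (∃ (g : G) (ρ : List (Q × G × Q)), IsRun E s qf g ρ))
    (hacc : {g : G | ∃ ρ : List (Q × G × Q), IsRun E q0 qf g ρ} = {1}) :
    ∃ η : Q → G, η q0 = 1 ∧ ∀ e ∈ E, η e.2.2 = η e.1 * e.2.1 :=
  trim_automaton_accepting_one_has_state_evaluation_general Q E q0 qf trim hacc
end

section
/- Hill-cutting for counter automata: let (Q, E) be a counter automaton where Q has exactly n elements, let p, p' ∈ Q, and let τ be a returning run from p to p'. If some counter value of τ is strictly greater than n², or some counter value of τ is strictly less than −n², then there exists a returning run τ' from p to p' such that the length of τ' is strictly less than the length of τ and the minimum counter value of τ' is at least the minimum counter value of τ. -/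
/-!
Suppose the counter exceeds `n²` at position `P`. For every level `ℓ ≤ n²` take the last visit
`iₗ` to `ℓ` before `P` and the first visit `jₗ` to `ℓ` after `P`; strictly between them the counter
stays above `ℓ`. By pigeonhole two levels `ℓ < ℓ'` see the same states at `iₗ, iₗ'` and at
`jₗ', jₗ`, so the cycles `τ[iₗ, iₗ')` and `τ[jₗ', jₗ)` can be cut out. Their effects `ℓ' - ℓ` and
`ℓ - ℓ'` cancel, and the part between them is shifted down by `ℓ' - ℓ`, so it stays at or above
`ℓ ≥ 0`. Below `-n²` the same construction applied to the negated counter shifts the middle part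
up, which cannot lower the minimum.
-/

/-- `ρ` is a run from `p` to `p'` in the counter automaton with edge set `E`:
a nonempty-or-empty chain of edges from `E` starting at `p` and ending at `p'`. -/
def IsCRun {Q : Type*} (E : Set (Q × ℤ × Q)) (p p' : Q) (ρ : List (Q × ℤ × Q)) : Prop :=
  (∀ e ∈ ρ, e ∈ E) ∧ ρ.Chain' (fun e f => e.2.2 = f.1) ∧
  (ρ = [] → p = p') ∧
  (∀ h : ρ ≠ [], (ρ.head h).1 = p ∧ (ρ.getLast h).2.2 = p')

/-- The counter value of a run after `i` steps: the sum of the first `i` counter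
updates. -/
def counterValue {Q : Type*} (ρ : List (Q × ℤ × Q)) (i : ℕ) : ℤ :=
  ((ρ.take i).map fun e => e.2.1).sum

def excise {α : Type*} (l : List α) (a b : ℕ) : List α := l.take a ++ l.drop b

section Excise

variable {α : Type*} {l : List α} {a b : ℕ}

lemma take_excise_of_le {i : ℕ} (hi : i ≤ a) (ha : a ≤ l.length) :
    (excise l a b).take i = l.take i := by
  rw [excise, List.take_append_of_le_length (by simp; omega), List.take_take, min_eq_left hi]

lemma length_excise (hab : a ≤ b) (hb : b ≤ l.length) :
    (excise l a b).length = l.length - (b - a) := by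
  simp [excise]; omega

end Excise

def endState {Q : Type*} (p : Q) : List (Q × ℤ × Q) → Q
  | [] => p
  | e :: ρ => endState e.2.2 ρ

section Runs

variable {Q : Type*} {E : Set (Q × ℤ × Q)} {p q r : Q}

set_option linter.deprecated false in
@[simp] lemma isCRun_nil : IsCRun E p q [] ↔ p = q := by
  simp [IsCRun, List.Chain']

set_option linter.deprecated false in
@[simp] lemma isCRun_cons {e : Q × ℤ × Q} {ρ : List (Q × ℤ × Q)} :
    IsCRun E p q (e :: ρ) ↔ e ∈ E ∧ e.1 = p ∧ IsCRun E e.2.2 q ρ := by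
  cases ρ with
  | nil => simp [IsCRun, List.Chain']
  | cons f ρ => simp [IsCRun, List.Chain']; tauto

namespace IsCRun

lemma append {ρ σ : List (Q × ℤ × Q)} (hρ : IsCRun E p q ρ) (hσ : IsCRun E q r σ) :
    IsCRun E p r (ρ ++ σ) := by
  induction ρ generalizing p with
  | nil => rwa [isCRun_nil.mp hρ]
  | cons e ρ ih => simp_all

lemma of_append {ρ σ : List (Q × ℤ × Q)} (h : IsCRun E p r (ρ ++ σ)) :
    IsCRun E p (endState p ρ) ρ ∧ IsCRun E (endState p ρ) r σ := by
  induction ρ generalizing p with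
  | nil => simpa [endState] using h
  | cons e ρ ih => simp_all [endState]

lemma excise {ρ : List (Q × ℤ × Q)} (h : IsCRun E p r ρ) {a b : ℕ}
    (hab : endState p (ρ.take a) = endState p (ρ.take b)) : IsCRun E p r (excise ρ a b) := by
  have ha := (List.take_append_drop a ρ ▸ h).of_append
  have hb := (List.take_append_drop b ρ ▸ h).of_append
  exact ha.1.append (hab ▸ hb.2)

end IsCRun

end Runs

section CounterValue

variable {Q : Type*} {ρ : List (Q × ℤ × Q)} {a b : ℕ}

lemma counterValue_zero (ρ : List (Q × ℤ × Q)) : counterValue ρ 0 = 0 := by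
  simp [counterValue]

lemma counterValue_take (ρ : List (Q × ℤ × Q)) (a i : ℕ) :
    counterValue (ρ.take a) i = counterValue ρ (min i a) := by
  simp only [counterValue, List.take_take]

lemma counterValue_append_length_add (ρ σ : List (Q × ℤ × Q)) (k : ℕ) :
    counterValue (ρ ++ σ) (ρ.length + k) = counterValue ρ ρ.length + counterValue σ k := by
  simp only [counterValue, List.take_append, List.take_length, Nat.add_sub_cancel_left,
    List.take_of_length_le (Nat.le_add_right _ _), List.map_append, List.sum_append]

lemma counterValue_drop (ρ : List (Q × ℤ × Q)) (b k : ℕ) :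
    counterValue (ρ.drop b) k = counterValue ρ (b + k) - counterValue ρ b := by
  simp [counterValue, List.take_add]

lemma counterValue_succ {i : ℕ} (hi : i < ρ.length) :
    counterValue ρ (i + 1) = counterValue ρ i + ρ[i].2.1 := by
  rw [counterValue, counterValue, List.take_add_one, List.getElem?_eq_getElem hi]
  simp only [Option.toList_some, List.map_append, List.sum_append, List.map_cons, List.map_nil,
    List.sum_cons, List.sum_nil, add_zero]

lemma abs_counterValue_succ_sub_le (hρ : ∀ e ∈ ρ, e.2.1 ∈ ({-1, 0, 1} : Set ℤ)) (i : ℕ) :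
    |counterValue ρ (i + 1) - counterValue ρ i| ≤ 1 := by
  rcases lt_or_ge i ρ.length with hi | hi
  · have hd := hρ ρ[i] (List.getElem_mem hi)
    simp only [Set.mem_insert_iff, Set.mem_singleton_iff] at hd
    rw [counterValue_succ hi, add_sub_cancel_left]
    rcases hd with h | h | h <;> simp [h]
  · simp [counterValue, List.take_of_length_le hi, List.take_of_length_le (hi.trans i.le_succ)]

lemma counterValue_excise_of_le {i : ℕ} (hi : i ≤ a) (ha : a ≤ ρ.length) :
    counterValue (excise ρ a b) i = counterValue ρ i := by
  rw [counterValue, take_excise_of_le hi ha, counterValue]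

lemma counterValue_excise_add (ha : a ≤ ρ.length) (k : ℕ) :
    counterValue (excise ρ a b) (a + k) =
      counterValue ρ a + (counterValue ρ (b + k) - counterValue ρ b) := by
  have hlen : (ρ.take a).length = a := by simpa using ha
  have h := counterValue_append_length_add (ρ.take a) (ρ.drop b) k
  rw [hlen, counterValue_drop, counterValue_take, min_self] at h
  exact h

lemma counterValue_excise_length (hab : a ≤ b) (hb : b ≤ ρ.length) :
    counterValue (excise ρ a b) (excise ρ a b).length =
      counterValue ρ ρ.length - (counterValue ρ b - counterValue ρ a) := by
  rw [length_excise hab hb, show ρ.length - (b - a) = a + (ρ.length - b) by omega,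
    counterValue_excise_add (hab.trans hb), Nat.add_sub_cancel' hb]
  ring

lemma counterValue_excise_excise {c d : ℕ} (hab : a ≤ b) (hbc : b ≤ c) (hcd : c ≤ d)
    (hd : d ≤ ρ.length)
    (hjump : counterValue ρ b - counterValue ρ a = counterValue ρ c - counterValue ρ d) {i : ℕ}
    (hi : i ≤ (excise (excise ρ c d) a b).length) :
    (∃ j ≤ ρ.length, counterValue (excise (excise ρ c d) a b) i = counterValue ρ j) ∨
      ∃ j, b ≤ j ∧ j ≤ c ∧ counterValue (excise (excise ρ c d) a b) i =
        counterValue ρ a - counterValue ρ b + counterValue ρ j := by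
  have hlen₁ : (excise ρ c d).length = ρ.length - (d - c) := length_excise hcd hd
  rw [length_excise hab (by omega), hlen₁] at hi
  have hc : c ≤ ρ.length := hcd.trans hd
  rcases le_or_gt i a with hia | hai
  · exact Or.inl ⟨i, by omega,
      by rw [counterValue_excise_of_le hia (by omega), counterValue_excise_of_le (by omega) hc]⟩
  obtain ⟨k, rfl⟩ := Nat.exists_eq_add_of_le hai.le
  rw [counterValue_excise_add (by omega), counterValue_excise_of_le (by omega) hc,
    counterValue_excise_of_le hbc hc]
  rcases le_or_gt (b + k) c with hkc | hck
  · exact Or.inr ⟨b + k, by omega, hkc, by rw [counterValue_excise_of_le hkc hc]; ring⟩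
  · obtain ⟨m, hm⟩ := Nat.exists_eq_add_of_le hck.le
    refine Or.inl ⟨d + m, by omega, ?_⟩
    rw [hm, counterValue_excise_add hc]
    linarith

end CounterValue

structure IsExcursion (f : ℕ → ℤ) (ℓ : ℤ) (i j : ℕ) : Prop where
  lt : i < j
  apply_left : f i = ℓ
  apply_right : f j = ℓ
  lt_apply : ∀ k, i < k → k < j → ℓ < f k

namespace IsExcursion

variable {f : ℕ → ℤ} {ℓ ℓ' : ℤ} {i j i' j' : ℕ}

lemma le_apply (h : IsExcursion f ℓ i j) {k : ℕ} (hik : i ≤ k) (hkj : k ≤ j) : ℓ ≤ f k := by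
  rcases hik.eq_or_lt with rfl | hik
  · exact h.apply_left.ge
  rcases hkj.eq_or_lt with rfl | hkj
  · exact h.apply_right.ge
  · exact (h.lt_apply k hik hkj).le

lemma nested (h : IsExcursion f ℓ i j) (h' : IsExcursion f ℓ' i' j') (hℓ : ℓ < ℓ')
    (hij' : i < j') (hi'j : i' < j) : i < i' ∧ j' < j := by
  constructor
  · by_contra! hle
    have hne : i' ≠ i := fun heq => by
      have := h'.apply_left; rw [heq, h.apply_left] at this; exact hℓ.ne this
    have := h'.lt_apply i (lt_of_le_of_ne hle hne) hij'
    rw [h.apply_left] at this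
    exact (hℓ.trans this).false
  · by_contra! hle
    have hne : j ≠ j' := fun heq => by
      have := h'.apply_right; rw [← heq, h.apply_right] at this; exact hℓ.ne this
    have := h'.lt_apply j hi'j (lt_of_le_of_ne hle hne)
    rw [h.apply_right] at this
    exact (hℓ.trans this).false

end IsExcursion

-- `i` is the last time `≤ ℓ` before `P` and `j` the first time `≤ ℓ` after `P`; unit steps force
-- the value `ℓ` at both.
lemma exists_isExcursion {f : ℕ → ℤ} (hf : ∀ k, |f (k + 1) - f k| ≤ 1) {L P : ℕ}
    (hPL : P ≤ L) {ℓ : ℤ} (h0 : f 0 ≤ ℓ) (hL : f L ≤ ℓ) (hP : ℓ < f P) :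
    ∃ i j, i < P ∧ P < j ∧ j ≤ L ∧ IsExcursion f ℓ i j := by
  classical
  set i := Nat.findGreatest (fun k => f k ≤ ℓ) P
  have hi : f i ≤ ℓ := Nat.findGreatest_spec (P := fun k => f k ≤ ℓ) (Nat.zero_le P) h0
  have hiP : i < P := lt_of_le_of_ne (Nat.findGreatest_le P) fun h => by rw [h] at hi; omega
  have hex : ∃ j, P ≤ j ∧ f j ≤ ℓ := ⟨L, hPL, hL⟩
  set j := Nat.find hex
  obtain ⟨hPj, hj⟩ : P ≤ j ∧ f j ≤ ℓ := Nat.find_spec hex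
  have hPj : P < j := lt_of_le_of_ne hPj fun h => by rw [← h] at hj; omega
  have inside : ∀ k, i < k → k < j → ℓ < f k := by
    intro k hik hkj
    rcases le_or_gt k P with hkP | hPk
    · exact not_le.mp (Nat.findGreatest_is_greatest hik hkP)
    · exact not_le.mp fun h => Nat.find_min hex hkj ⟨hPk.le, h⟩
  have step_left := abs_le.mp (hf i)
  have step_right := abs_le.mp (hf (j - 1))
  rw [Nat.sub_add_cancel (by omega)] at step_right
  have above_left := inside (i + 1) (by omega) (by omega)
  have above_right := inside (j - 1) (by omega) (by omega)
  exact ⟨i, j, hiP, hPj, Nat.find_min' hex ⟨hPL, hL⟩, ⟨by omega, by omega, by omega, inside⟩⟩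

lemma exists_nested_isExcursion {Q : Type*} [Fintype Q] (st : ℕ → Q) {f : ℕ → ℤ}
    (hf : ∀ k, |f (k + 1) - f k| ≤ 1) {L P : ℕ} (hPL : P ≤ L) (h0 : f 0 = 0) (hL : f L = 0)
    (hP : (Fintype.card Q : ℤ) ^ 2 < f P) :
    ∃ a b c d : ℕ, ∃ ℓ ℓ' : ℤ, 0 ≤ ℓ ∧ ℓ < ℓ' ∧ a < b ∧ c < d ∧ d ≤ L ∧
      st a = st b ∧ st c = st d ∧ IsExcursion f ℓ a d ∧ IsExcursion f ℓ' b c := by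
  have hexc (ℓ : Fin (Fintype.card Q ^ 2 + 1)) :
      ∃ i j, i < P ∧ P < j ∧ j ≤ L ∧ IsExcursion f ℓ i j := by
    have : ((ℓ : ℕ) : ℤ) ≤ (Fintype.card Q : ℤ) ^ 2 := by
      exact_mod_cast Nat.lt_succ_iff.mp ℓ.2
    exact exists_isExcursion hf hPL (by omega) (by omega) (by omega)
  choose I J hIP hPJ hJL hIJ using hexc
  obtain ⟨x, y, hxy, hst⟩ := Fintype.exists_ne_map_eq_of_card_lt
    (fun ℓ => (st (I ℓ), st (J ℓ))) (by simp only [Fintype.card_prod, Fintype.card_fin]; lia)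
  wlog hlt : x < y generalizing x y
  · exact this y x hxy.symm hst.symm (lt_of_le_of_ne (not_lt.mp hlt) hxy.symm)
  obtain ⟨hab, hcd⟩ := (hIJ x).nested (hIJ y) (by exact_mod_cast hlt)
    ((hIP x).trans (hPJ y)) ((hIP y).trans (hPJ x))
  exact ⟨I x, I y, J y, J x, x, y, by positivity, by exact_mod_cast hlt, hab, hcd, hJL x,
    congrArg Prod.fst hst, (congrArg Prod.snd hst).symm, hIJ x, hIJ y⟩

lemma exists_excision_positions {Q : Type*} [Fintype Q] (p : Q) {ρ : List (Q × ℤ × Q)}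
    (hρ : ∀ e ∈ ρ, e.2.1 ∈ ({-1, 0, 1} : Set ℤ)) (hret : counterValue ρ ρ.length = 0)
    (hbig : (∃ i ≤ ρ.length, (Fintype.card Q : ℤ) ^ 2 < counterValue ρ i) ∨
      (∃ i ≤ ρ.length, counterValue ρ i < -(Fintype.card Q : ℤ) ^ 2)) :
    ∃ a b c d, a < b ∧ b ≤ c ∧ c ≤ d ∧ d ≤ ρ.length ∧
      endState p (ρ.take a) = endState p (ρ.take b) ∧
      endState p (ρ.take c) = endState p (ρ.take d) ∧
      counterValue ρ b - counterValue ρ a = counterValue ρ c - counterValue ρ d ∧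
      ∀ j, b ≤ j → j ≤ c → ∃ j' ≤ ρ.length,
        counterValue ρ j' ≤ counterValue ρ a - counterValue ρ b + counterValue ρ j := by
  have hstep := abs_counterValue_succ_sub_le hρ
  rcases hbig with ⟨P, hP, hbig⟩ | ⟨P, hP, hbig⟩
  · obtain ⟨a, b, c, d, ℓ, ℓ', hℓ, hℓℓ', hab, hcd, hdL, hsab, hscd, had, hbc⟩ :=
      exists_nested_isExcursion (fun i => endState p (ρ.take i)) hstep hP
        (counterValue_zero ρ) hret hbig
    refine ⟨a, b, c, d, hab, hbc.lt.le, hcd.le, hdL, hsab, hscd, ?_, fun j hbj hjc => ?_⟩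
    · rw [had.apply_left, had.apply_right, hbc.apply_left, hbc.apply_right]
    · refine ⟨0, Nat.zero_le _, ?_⟩
      have := hbc.le_apply hbj hjc
      rw [counterValue_zero, had.apply_left, hbc.apply_left]
      linarith
  · obtain ⟨a, b, c, d, ℓ, ℓ', -, hℓℓ', hab, hcd, hdL, hsab, hscd, had, hbc⟩ :=
      exists_nested_isExcursion (fun i => endState p (ρ.take i)) (f := fun i => -counterValue ρ i)
        (fun k => by rw [neg_sub_neg, abs_sub_comm]; exact hstep k) hP
        (by simp [counterValue_zero]) (by simp [hret]) (by linarith)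
    refine ⟨a, b, c, d, hab, hbc.lt.le, hcd.le, hdL, hsab, hscd, ?_,
      fun j _ hjc => ⟨j, by omega, ?_⟩⟩
    · linarith [had.apply_left, had.apply_right, hbc.apply_left, hbc.apply_right]
    · linarith [had.apply_left, hbc.apply_left]

/-- Hill-cutting for counter automata: if a returning run of an `n`-state counter
automaton reaches a counter value above `n²` or below `-n²`, then there is a strictly
shorter returning run between the same states whose minimum counter value is at least
the minimum counter value of the original run. -/
theorem counter_automaton_hill_cutting
    {Q : Type*} [Fintype Q] (n : ℕ) (hcard : Fintype.card Q = n)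
    (E : Set (Q × ℤ × Q)) (hE : ∀ e ∈ E, e.2.1 ∈ ({-1, 0, 1} : Set ℤ))
    (p p' : Q) (τ : List (Q × ℤ × Q)) (hrun : IsCRun E p p' τ)
    (hret : counterValue τ τ.length = 0)
    (hbig : (∃ i ≤ τ.length, (n : ℤ) ^ 2 < counterValue τ i) ∨
            (∃ i ≤ τ.length, counterValue τ i < -(n : ℤ) ^ 2)) :
    ∃ τ' : List (Q × ℤ × Q), IsCRun E p p' τ' ∧
      counterValue τ' τ'.length = 0 ∧
      τ'.length < τ.length ∧
      ∀ i ≤ τ'.length, ∃ j ≤ τ.length, counterValue τ j ≤ counterValue τ' i := by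
  subst hcard
  obtain ⟨a, b, c, d, hab, hbc, hcd, hdL, hsab, hscd, hjump, hmin⟩ :=
    exists_excision_positions p (fun e he => hE e (hrun.1 e he)) hret hbig
  have hc : c ≤ τ.length := hcd.trans hdL
  have hlen₁ : (excise τ c d).length = τ.length - (d - c) := length_excise hcd hdL
  have hrun₁ : IsCRun E p p' (excise τ c d) := hrun.excise hscd
  refine ⟨excise (excise τ c d) a b, hrun₁.excise ?_, ?_, ?_, fun i hi => ?_⟩
  · rwa [take_excise_of_le (hab.le.trans hbc) hc, take_excise_of_le hbc hc]
  · rw [counterValue_excise_length hab.le (by omega), counterValue_excise_length hcd hdL,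
      counterValue_excise_of_le (hab.le.trans hbc) hc, counterValue_excise_of_le hbc hc, hret]
    linarith
  · rw [length_excise hab.le (by omega), hlen₁]
    omega
  · rcases counterValue_excise_excise hab.le hbc hcd hdL hjump hi with
      ⟨j, hj, h⟩ | ⟨j, hbj, hjc, h⟩
    · exact ⟨j, hj, h.ge⟩
    · obtain ⟨j', hj', h'⟩ := hmin j hbj hjc
      exact ⟨j', hj', h ▸ h'⟩
end

section
/- Let k, ℓ, m : ℕ, let d : Fin k → ℕ be nondecreasing with 1 ≤ d i for all i, and let e : Fin ℓ → ℕ be strictly increasing with 1 ≤ e j for all j. If ∑ i : Fin k, (1 + 2^(−(d i : ℤ))) = (m : ℚ) + ∑ j : Fin ℓ, 2^(−(e j : ℤ)) as an equality in ℚ, then m ≥ ℓ. -/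
/-!
Multiplying by `2 ^ N`, with `N` at least every exponent, turns the identity into
`2 ^ N * k + (a sum of k powers of two) = 2 ^ N * m + D`, where `D < 2 ^ N` has exactly `ℓ` ones
in binary. Hence `k ≤ m`, and `D` is the part below `2 ^ N` of the left-over sum of `k` powers
of two. Since the binary digit sum is subadditive, that sum has at most `k` binary ones, while
its digits below `2 ^ N` are those of `D`; so `ℓ ≤ k ≤ m`.
-/

open Finset

namespace Nat

-- Legendre: `(p - 1) * v_p(n!) = n - s_p(n)`, and `a! * b!` divides `(a + b)!`.
theorem digits_sum_add_le (p : ℕ) [Fact p.Prime] (a b : ℕ) :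
    (p.digits (a + b)).sum ≤ (p.digits a).sum + (p.digits b).sum := by
  have hv : padicValNat p (a ! * b !) ≤ padicValNat p (a + b)! :=
    (padicValNat_dvd_iff_le (factorial_ne_zero _)).mp
      (pow_padicValNat_dvd.trans (factorial_mul_factorial_dvd_factorial_add a b))
  rw [padicValNat.mul (factorial_ne_zero _) (factorial_ne_zero _)] at hv
  have hab := sub_one_mul_padicValNat_factorial (p := p) (a + b)
  have ha := sub_one_mul_padicValNat_factorial (p := p) a
  have hb := sub_one_mul_padicValNat_factorial (p := p) b
  have := Nat.mul_le_mul_left (p - 1) hv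
  have := digit_sum_le p a
  have := digit_sum_le p b
  have := digit_sum_le p (a + b)
  rw [Nat.mul_add] at *
  omega

theorem digits_sum_add_base_pow_mul {b k n : ℕ} (hb : 1 < b) (hn : n < b ^ k) (m : ℕ) :
    (b.digits (n + b ^ k * m)).sum = (b.digits n).sum + (b.digits m).sum := by
  rcases Nat.eq_zero_or_pos m with rfl | hm
  · simp
  obtain ⟨j, hj⟩ := Nat.exists_eq_add_of_le ((digits_length_le_iff hb n).mpr hn)
  rw [hj, ← digits_append_zeroes_append_digits hb hm]
  simp

theorem digits_sum_base_pow {b : ℕ} (hb : 1 < b) (k : ℕ) : (b.digits (b ^ k)).sum = 1 := by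
  simpa [digits_of_lt b 1 one_ne_zero hb] using
    congrArg List.sum (digits_base_pow_mul hb (m := 1) (k := k) one_pos)

theorem digits_sum_sum_pow_le (p : ℕ) [hp : Fact p.Prime] {ι : Type*} (s : Finset ι)
    (f : ι → ℕ) : (p.digits (∑ i ∈ s, p ^ f i)).sum ≤ #s := by
  have := le_sum_of_subadditive (fun n => (p.digits n).sum) (by simp) (digits_sum_add_le p) s
    (fun i => p ^ f i)
  simpa only [digits_sum_base_pow hp.out.one_lt, sum_const, smul_eq_mul, mul_one] using this

theorem digits_sum_sum_base_pow {b : ℕ} (hb : 1 < b) (s : Finset ℕ) :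
    (b.digits (∑ a ∈ s, b ^ a)).sum = #s := by
  induction s using Finset.induction_on_max with
  | empty => simp
  | insert a s hs ih =>
    have ha : a ∉ s := fun h => lt_irrefl a (hs a h)
    rw [sum_insert ha, card_insert_of_notMem ha, add_comm, ← mul_one (b ^ a),
      digits_sum_add_base_pow_mul hb (Nat.geomSum_lt hb hs), ih]
    simp [digits_of_lt b 1 one_ne_zero hb]

end Nat

theorem pow_mul_sum_zpow_neg_eq_natCast {K ι : Type*} [Field K] {b : ℕ} (hb : (b : K) ≠ 0)
    (N : ℕ) (s : Finset ι) (f : ι → ℕ) (hf : ∀ i ∈ s, f i ≤ N) :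
    (b : K) ^ N * ∑ i ∈ s, (b : K) ^ (-(f i : ℤ)) = ((∑ i ∈ s, b ^ (N - f i) : ℕ) : K) := by
  rw [mul_sum]
  push_cast
  refine sum_congr rfl fun i hi => ?_
  rw [← zpow_natCast, ← zpow_add₀ hb, ← zpow_natCast, Nat.cast_sub (hf i hi)]
  ring_nf

theorem card_le_of_pow_mul_card_add_sum_pow_eq (p : ℕ) [hp : Fact p.Prime] {ι : Type*}
    {N m : ℕ} (s : Finset ι) (f : ι → ℕ) {T : Finset ℕ} (hT : ∀ a ∈ T, a < N)
    (h : p ^ N * #s + ∑ i ∈ s, p ^ f i = p ^ N * m + ∑ a ∈ T, p ^ a) : #T ≤ m := by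
  have hTlt : ∑ a ∈ T, p ^ a < p ^ N := Nat.geomSum_lt hp.out.two_le hT
  have hsm : #s ≤ m := by
    by_contra! hms
    have : p ^ N * (m + 1) ≤ p ^ N * #s := Nat.mul_le_mul_left _ hms
    rw [mul_add_one] at this
    omega
  obtain ⟨c, rfl⟩ := Nat.exists_eq_add_of_le hsm
  have hsplit : ∑ i ∈ s, p ^ f i = ∑ a ∈ T, p ^ a + p ^ N * c := by
    rw [mul_add] at h
    omega
  have := Nat.digits_sum_sum_pow_le p s f
  rw [hsplit, Nat.digits_sum_add_base_pow_mul hp.out.one_lt hTlt,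
    Nat.digits_sum_sum_base_pow hp.out.one_lt] at this
  omega

theorem summing_up_10_general (k ℓ m : ℕ) (d : Fin k → ℕ)
    (e : Fin ℓ → ℕ) (he : StrictMono e) (he1 : ∀ j, 1 ≤ e j)
    (heq : ∑ i : Fin k, ((1 : ℚ) + 2 ^ (-(d i : ℤ))) =
           (m : ℚ) + ∑ j : Fin ℓ, (2 : ℚ) ^ (-(e j : ℤ))) :
    ℓ ≤ m := by
  classical
  set N := univ.sup d ⊔ univ.sup e
  have hdN (i : Fin k) : d i ≤ N := le_sup_of_le_left (le_sup (mem_univ i))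
  have heN (j : Fin ℓ) : e j ≤ N := le_sup_of_le_right (le_sup (mem_univ j))
  have hinj : Function.Injective fun j => N - e j := fun i j h => he.injective (by grind)
  have hT (a : ℕ) (ha : a ∈ univ.image fun j => N - e j) : a < N := by
    obtain ⟨j, -, rfl⟩ := mem_image.mp ha
    grind
  have hnat : 2 ^ N * #(univ : Finset (Fin k)) + ∑ i, 2 ^ (N - d i) =
      2 ^ N * m + ∑ a ∈ univ.image fun j => N - e j, 2 ^ a := by
    rw [sum_image fun i _ j _ h => hinj h]
    have hd2 := pow_mul_sum_zpow_neg_eq_natCast (K := ℚ) two_ne_zero N univ d fun i _ => hdN i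
    have he2 := pow_mul_sum_zpow_neg_eq_natCast (K := ℚ) two_ne_zero N univ e fun j _ => heN j
    have := congrArg ((2 : ℚ) ^ N * ·) heq
    simp only [sum_add_distrib, sum_const, nsmul_one, mul_add] at this
    push_cast at hd2 he2
    rw [hd2, he2] at this
    exact_mod_cast this
  simpa [card_image_of_injective _ hinj] using
    card_le_of_pow_mul_card_add_sum_pow_eq 2 univ (fun i => N - d i) hT hnat

/-- Summing-up lemma for the numbers `1 + 2^(-d i)`. -/
theorem summing_up_10 (k ℓ m : ℕ) (d : Fin k → ℕ) (hd : Monotone d) (hd1 : ∀ i, 1 ≤ d i)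
    (e : Fin ℓ → ℕ) (he : StrictMono e) (he1 : ∀ j, 1 ≤ e j)
    (heq : ∑ i : Fin k, ((1 : ℚ) + 2 ^ (-(d i : ℤ))) =
           (m : ℚ) + ∑ j : Fin ℓ, (2 : ℚ) ^ (-(e j : ℤ))) :
    ℓ ≤ m :=
  summing_up_10_general k ℓ m d e he he1 heq
end

section
/- Let n : ℕ and let S be the additive submonoid of ℚ generated by {x : ℚ | ∃ i : ℕ, 1 ≤ i ∧ x = 1 + 2^(−(i:ℤ))}. Then (n : ℚ) + ∑_{i=1}^{n} 2^(−(i:ℤ)) ∈ S, and for every m : ℕ with (m : ℚ) + ∑_{i=1}^{n} 2^(−(i:ℤ)) ∈ S one has m ≥ n; that is, n is the least natural number m such that (m : ℚ) + ∑_{i=1}^{n} 2^(−(i:ℤ)) ∈ S. -/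
/-- The additive submonoid of `ℚ` generated by the numbers `1 + 2^(-i)`, `i ≥ 1`. -/
def genSubmonoid : AddSubmonoid ℚ :=
  AddSubmonoid.closure {x : ℚ | ∃ i : ℕ, 1 ≤ i ∧ x = 1 + 2 ^ (-(i : ℤ))}

/-!
An element of `genSubmonoid` is `card M + ∑_{i ∈ M} 2^(-i)` for a multiset `M` of positive
indices. Writing `m + 1 - 2^(-n)` in this form forces `card M ≥ n + 2 (m - card M)`: the terms
`2^(-1)` contribute half-integers, and doubling the remaining terms lowers every index by one
and turns `2^(-n)` into `2^(-(n-1))`, which sets up an induction on `n`.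
-/

open Finset

lemma two_zpow_neg_succ (i : ℕ) : (2 : ℚ) ^ (-((i + 1 : ℕ) : ℤ)) = 2 ^ (-(i : ℤ)) / 2 := by
  rw [Nat.cast_succ, neg_add, zpow_add₀ two_ne_zero]
  norm_num [div_eq_mul_inv]

lemma sum_Icc_two_zpow_neg (n : ℕ) :
    ∑ i ∈ Icc 1 n, (2 : ℚ) ^ (-(i : ℤ)) = 1 - 2 ^ (-(n : ℤ)) := by
  induction n with
  | zero => simp
  | succ n ih =>
    rw [sum_Icc_succ_top (by omega), ih, two_zpow_neg_succ]
    ring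

def dyadicSum (M : Multiset ℕ) : ℚ :=
  (M.map fun i : ℕ => (2 : ℚ) ^ (-(i : ℤ))).sum

@[simp]
lemma dyadicSum_add (M N : Multiset ℕ) : dyadicSum (M + N) = dyadicSum M + dyadicSum N := by
  simp [dyadicSum]

lemma dyadicSum_nonneg (M : Multiset ℕ) : 0 ≤ dyadicSum M :=
  Multiset.sum_nonneg fun _ hx => by
    obtain ⟨i, -, rfl⟩ := Multiset.mem_map.1 hx
    positivity

lemma dyadicSum_le_card_div_two {M : Multiset ℕ} (hM : ∀ i ∈ M, 1 ≤ i) :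
    dyadicSum M ≤ Multiset.card M / 2 := by
  have hle : dyadicSum M ≤ Multiset.card M • (2⁻¹ : ℚ) := by
    simpa [dyadicSum] using Multiset.sum_le_card_nsmul (M.map fun i : ℕ => (2 : ℚ) ^ (-(i : ℤ)))
      _ fun x hx => by
      obtain ⟨i, hi, rfl⟩ := Multiset.mem_map.1 hx
      calc (2 : ℚ) ^ (-(i : ℤ)) ≤ 2 ^ (-(1 : ℤ)) :=
            zpow_le_zpow_right₀ one_le_two (by have := hM i hi; omega)
        _ = 2⁻¹ := by norm_num
  rwa [nsmul_eq_mul, ← div_eq_mul_inv] at hle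

lemma dyadicSum_replicate_one (c : ℕ) : dyadicSum (Multiset.replicate c 1) = c / 2 := by
  simp [dyadicSum, div_eq_mul_inv]

lemma dyadicSum_map_succ (M : Multiset ℕ) : dyadicSum (M.map (· + 1)) = dyadicSum M / 2 := by
  simp only [dyadicSum, Multiset.map_map, Function.comp_def, two_zpow_neg_succ,
    Multiset.sum_map_div]

lemma Multiset.exists_eq_replicate_one_add_map_succ {M : Multiset ℕ} (hM : ∀ i ∈ M, 1 ≤ i) :
    ∃ (c : ℕ) (M' : Multiset ℕ), (∀ i ∈ M', 1 ≤ i) ∧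
      M = Multiset.replicate c 1 + M'.map (· + 1) := by
  classical
  refine ⟨(M.filter (· = 1)).card, (M.filter (· ≠ 1)).map (· - 1), ?_, ?_⟩
  · simp only [Multiset.mem_map, Multiset.mem_filter]
    rintro _ ⟨i, ⟨hi, hi1⟩, rfl⟩
    have := hM i hi
    omega
  · have hones : M.filter (· = 1) = Multiset.replicate (M.filter (· = 1)).card 1 :=
      Multiset.eq_replicate_card.2 fun b hb => (Multiset.mem_filter.1 hb).2
    have hrest : ((M.filter (· ≠ 1)).map (· - 1)).map (· + 1) = M.filter (· ≠ 1) := by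
      rw [Multiset.map_map]
      refine (Multiset.map_congr rfl fun i hi => ?_).trans (Multiset.map_id _)
      obtain ⟨hi, hi1⟩ := Multiset.mem_filter.1 hi
      have := hM i hi
      simp only [Function.comp_apply, id]
      omega
    rw [hrest, ← hones, Multiset.filter_add_not]

theorem add_two_mul_le_card_of_dyadicSum_eq (n p : ℕ) {M : Multiset ℕ} (hM : ∀ i ∈ M, 1 ≤ i)
    (hsum : dyadicSum M = p + 1 - 2 ^ (-(n : ℤ))) : n + 2 * p ≤ Multiset.card M := by
  induction n generalizing p M with
  | zero =>
    have hle := dyadicSum_le_card_div_two hM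
    rw [hsum] at hle
    have : (2 * p : ℚ) ≤ Multiset.card M := by norm_num at hle; linarith
    norm_cast at this
    omega
  | succ n ih =>
    obtain ⟨c, M', hM', rfl⟩ := Multiset.exists_eq_replicate_one_add_map_succ hM
    rw [dyadicSum_add, dyadicSum_replicate_one, dyadicSum_map_succ, two_zpow_neg_succ] at hsum
    have hM'sum : dyadicSum M' = 2 * p + 2 - c - 2 ^ (-(n : ℤ)) := by linarith
    have hc : c ≤ 2 * p + 1 := by
      have : (c : ℚ) < 2 * p + 2 := by
        linarith [dyadicSum_nonneg M', zpow_pos (two_pos : (0 : ℚ) < 2) (-(n : ℤ))]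
      exact_mod_cast Nat.lt_succ_iff.1 (by exact_mod_cast this)
    have hcount := ih (2 * p + 1 - c) hM' (by push_cast [hc]; linarith)
    simp only [Multiset.card_add, Multiset.card_replicate, Multiset.card_map]
    omega

lemma exists_multiset_of_mem_genSubmonoid {x : ℚ} (hx : x ∈ genSubmonoid) :
    ∃ M : Multiset ℕ, (∀ i ∈ M, 1 ≤ i) ∧ x = Multiset.card M + dyadicSum M := by
  induction hx using AddSubmonoid.closure_induction with
  | mem x hx =>
    obtain ⟨i, hi, rfl⟩ := hx
    exact ⟨{i}, by simpa using hi, by simp [dyadicSum]⟩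
  | zero => exact ⟨0, by simp, by simp [dyadicSum]⟩
  | add x y _ _ ihx ihy =>
    obtain ⟨M, hM, rfl⟩ := ihx
    obtain ⟨N, hN, rfl⟩ := ihy
    refine ⟨M + N, fun i hi => (Multiset.mem_add.1 hi).elim (hM i) (hN i), ?_⟩
    push_cast [Multiset.card_add, dyadicSum_add]
    ring

/-- `n` is the least natural number `m` such that `m + 2⁻¹ + ⋯ + 2⁻ⁿ` belongs to the
submonoid generated by the numbers `1 + 2^(-i)`, `i ≥ 1`. -/
theorem smallest_integer (n : ℕ) :
    ((n : ℚ) + ∑ i ∈ Finset.Icc 1 n, (2 : ℚ) ^ (-(i : ℤ)) ∈ genSubmonoid) ∧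
    (∀ m : ℕ, (m : ℚ) + ∑ i ∈ Finset.Icc 1 n, (2 : ℚ) ^ (-(i : ℤ)) ∈ genSubmonoid →
      n ≤ m) := by
  refine ⟨?_, fun m hm => ?_⟩
  · have : ∑ i ∈ Icc 1 n, (1 + (2 : ℚ) ^ (-(i : ℤ))) ∈ genSubmonoid :=
      sum_mem fun i hi => AddSubmonoid.subset_closure ⟨i, (mem_Icc.1 hi).1, rfl⟩
    simpa [sum_add_distrib] using this
  · rw [sum_Icc_two_zpow_neg] at hm
    obtain ⟨M, hM, hx⟩ := exists_multiset_of_mem_genSubmonoid hm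
    have hpos : (0 : ℚ) < 2 ^ (-(n : ℤ)) := by positivity
    have hk : Multiset.card M ≤ m := by
      have : (Multiset.card M : ℚ) < m + 1 := by linarith [dyadicSum_nonneg M]
      exact_mod_cast Nat.lt_succ_iff.1 (by exact_mod_cast this)
    have hcount := add_two_mul_le_card_of_dyadicSum_eq n (m - Multiset.card M) hM
      (by push_cast [hk]; linarith)
    omega
end

section
/- Let q ≥ 2 and k ≥ 1 be integers, and let H be the subgroup of GL (Fin 2) ℚ generated by {t^k} ∪ {u k ℓ | ℓ : ℤ}. Then H ≤ BS(1,q); H is normal in BS(1,q), i.e., for every g ∈ BS(1,q) and every h ∈ H, g * h * g⁻¹ ∈ H; and H has finite index in BS(1,q), i.e., the collection of left cosets {g * h | h ∈ H} for g ranging over BS(1,q) is a finite collection of subsets of GL (Fin 2) ℚ. -/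
/-!
Write `affGL s y` for `!![s, y; 0, 1]`, the affine map `x ↦ s x + y`. Then `a = affGL 1 1`,
`t = affGL q 0` and `u k ℓ = affGL 1 (q^ℓ - q^(ℓ+k))`, so `H` contains every
`affGL (q^(kn)) (m (q^ℓ - q^(ℓ+k)))`. As `t^ℓ a t^(-ℓ) = affGL 1 (q^ℓ)`, the `u k ℓ` lie in
`BS(1,q)`, and conjugating the generators of `H` by `a^(±1)`, `t^(±1)` lands in `H` again.
For finite index, `affGL (q^j) c · H` only depends on `j mod k` and `c mod (q^k - 1)`, so the
finitely many cosets `affGL (q^j) i · H` with `0 ≤ j < k`, `0 ≤ i < q^k - 1` are permuted by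
right multiplication by `a^(±1)`, `t^(±1)` (which is well defined by normality), and hence
exhaust `BS(1,q) / H`.
-/

open Matrix

/-- The subgroup generated by `t^k` and the elements `u k ℓ`, `ℓ : ℤ`. -/
noncomputable def Hsub (q : ℕ) (hq : 2 ≤ q) (k : ℤ) : Subgroup (GL (Fin 2) ℚ) :=
  Subgroup.closure ({(tElem q hq) ^ k} ∪ {g : GL (Fin 2) ℚ | ∃ ℓ : ℤ, g = uElem q k ℓ})

open Matrix.GeneralLinearGroup
open scoped Pointwise

section Affine

variable {K : Type*} [Field K]

noncomputable def affGL (s : Kˣ) (y : K) : GL (Fin 2) K :=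
  mkOfDetNeZero !![(s : K), y; 0, 1] (by simp [det_fin_two_of])

lemma affGL_mul (s s' : Kˣ) (y y' : K) :
    affGL s y * affGL s' y' = affGL (s * s') (s * y' + y) := by
  ext : 1
  simp [affGL, mkOfDetNeZero]

lemma affGL_one_zero : affGL (1 : Kˣ) 0 = 1 := by
  ext : 1
  simp [affGL, mkOfDetNeZero, one_fin_two]

lemma affGL_inv (s : Kˣ) (y : K) : (affGL s y)⁻¹ = affGL s⁻¹ (-(↑s⁻¹ * y)) :=
  inv_eq_of_mul_eq_one_left <| by simp [affGL_mul, affGL_one_zero]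

lemma affGL_one_left (y : K) : affGL 1 y = upperRightHom y := by
  ext : 1
  simp [affGL, mkOfDetNeZero]

lemma affGL_eq_mul (s : Kˣ) (y : K) : affGL s y = upperRightHom y * affGL s 0 := by
  rw [← affGL_one_left, affGL_mul, one_mul, mul_zero, zero_add]

lemma affGL_zero_zpow (s : Kˣ) (n : ℤ) : affGL s 0 ^ n = affGL (s ^ n) 0 :=
  (map_zpow (MonoidHom.mk' (affGL · (0 : K)) fun s s' ↦ by simp [affGL_mul]) s n).symm

lemma affGL_conj (s s' : Kˣ) (y z : K) :
    affGL s z * affGL s' y * (affGL s z)⁻¹ = affGL s' (s * y + (1 - s') * z) := by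
  rw [affGL_inv, affGL_mul, affGL_mul, mul_inv_cancel_comm]
  congr 1
  simp only [Units.val_mul, Units.val_inv_eq_inv_val]
  field_simp
  ring

end Affine

lemma Subgroup.conj_mem_closure_of_forall_conj_mem {G : Type*} [Group G] {S : Set G} {x : G}
    (hx : ∀ s ∈ S, x * s * x⁻¹ ∈ Subgroup.closure S) {h : G} (hh : h ∈ Subgroup.closure S) :
    x * h * x⁻¹ ∈ Subgroup.closure S := by
  have hle : Subgroup.closure S ≤ (Subgroup.closure S).comap (MulAut.conj x).toMonoidHom :=
    (Subgroup.closure_le _).2 hx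
  exact hle hh

lemma Subgroup.conj_mem_of_mem_closure {G : Type*} [Group G] {S : Set G} {H : Subgroup G}
    (hS : ∀ s ∈ S, ∀ h ∈ H, s * h * s⁻¹ ∈ H) (hS_inv : ∀ s ∈ S, ∀ h ∈ H, s⁻¹ * h * s ∈ H)
    {g : G} (hg : g ∈ Subgroup.closure S) : ∀ h ∈ H, g * h * g⁻¹ ∈ H := by
  induction hg using Subgroup.closure_induction'' with
  | mem s hs => exact hS s hs
  | inv_mem s hs => simpa only [inv_inv] using hS_inv s hs
  | one => simp
  | mul x y _ _ hx hy =>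
    intro h hh
    simpa only [_root_.mul_inv_rev, mul_assoc] using hx _ (hy h hh)

lemma natCast_ne_zero_of_two_le {q : ℕ} (hq : 2 ≤ q) : (q : ℚ) ≠ 0 :=
  Nat.cast_ne_zero.2 (by omega)

section BaumslagSolitar

variable {q : ℕ} (hq : 2 ≤ q)

noncomputable def qUnit : ℚˣ :=
  Units.mk0 q (natCast_ne_zero_of_two_le hq)

@[simp]
lemma val_qUnit : (qUnit hq : ℚ) = q := rfl

lemma aElem_eq : aElem = affGL 1 1 := by
  ext : 1
  simp [aElem, affGL]

lemma tElem_eq : tElem q hq = affGL (qUnit hq) 0 := by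
  ext : 1
  simp [tElem, affGL]

lemma tElem_zpow (m : ℤ) : tElem q hq ^ m = affGL (qUnit hq ^ m) 0 := by
  rw [tElem_eq, affGL_zero_zpow]

lemma uElem_eq (k ℓ : ℤ) : uElem q k ℓ = affGL 1 ((q : ℚ) ^ ℓ - (q : ℚ) ^ (ℓ + k)) := by
  ext : 1
  simp [uElem, affGL]

lemma Hsub_le_BS (k : ℤ) : Hsub q hq k ≤ BS q hq := by
  have ha : aElem ∈ BS q hq := Subgroup.subset_closure (by simp)
  have ht : tElem q hq ∈ BS q hq := Subgroup.subset_closure (by simp)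
  have hconj (m : ℤ) : affGL 1 ((q : ℚ) ^ m) ∈ BS q hq := by
    have : tElem q hq ^ m * aElem * (tElem q hq ^ m)⁻¹ = affGL 1 ((q : ℚ) ^ m) := by
      simp [tElem_zpow, aElem_eq, affGL_conj]
    rw [← this]
    exact mul_mem (mul_mem (zpow_mem ht m) ha) (inv_mem (zpow_mem ht m))
  rw [Hsub, Subgroup.closure_le]
  rintro s (rfl | ⟨ℓ, rfl⟩)
  · exact zpow_mem ht k
  · rw [uElem_eq, affGL_one_left, sub_eq_add_neg, AddChar.map_add_eq_mul,
      AddChar.map_neg_eq_inv, ← affGL_one_left, ← affGL_one_left]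
    exact mul_mem (hconj ℓ) (inv_mem (hconj (ℓ + k)))

lemma tElem_zpow_mem_Hsub (k : ℤ) : tElem q hq ^ k ∈ Hsub q hq k :=
  Subgroup.subset_closure (Set.mem_union_left _ rfl)

lemma uElem_mem_Hsub (k ℓ : ℤ) : uElem q k ℓ ∈ Hsub q hq k :=
  Subgroup.subset_closure (Set.mem_union_right _ ⟨ℓ, rfl⟩)

lemma affGL_mem_Hsub (k n m ℓ : ℤ) :
    affGL (qUnit hq ^ (k * n)) (m * ((q : ℚ) ^ ℓ - (q : ℚ) ^ (ℓ + k))) ∈ Hsub q hq k := by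
  rw [affGL_eq_mul, ← zsmul_eq_mul, AddChar.map_zsmul_eq_zpow, ← affGL_one_left, ← uElem_eq,
    _root_.zpow_mul, ← affGL_zero_zpow, ← tElem_zpow]
  exact mul_mem (zpow_mem (uElem_mem_Hsub hq k ℓ) m) (zpow_mem (tElem_zpow_mem_Hsub hq k) n)

lemma conj_affGL_mem_Hsub (k m z : ℤ) {h : GL (Fin 2) ℚ} (hh : h ∈ Hsub q hq k) :
    affGL (qUnit hq ^ m) z * h * (affGL (qUnit hq ^ m) z)⁻¹ ∈ Hsub q hq k := by
  refine Subgroup.conj_mem_closure_of_forall_conj_mem ?_ hh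
  rintro s (rfl | ⟨ℓ, rfl⟩) <;> change _ ∈ Hsub q hq k
  · -- the conjugate is `u k 0 ^ z * t ^ k`
    rw [tElem_zpow, affGL_conj]
    convert affGL_mem_Hsub hq k 1 z 0 using 2
    · simp
    · simp
      ring
  · rw [uElem_eq, affGL_conj]
    convert affGL_mem_Hsub hq k 0 1 (ℓ + m) using 2
    · simp
    · simp [zpow_add₀ (natCast_ne_zero_of_two_le hq)]
      ring

lemma conj_mem_Hsub (k : ℤ) : ∀ g ∈ BS q hq, ∀ h ∈ Hsub q hq k, g * h * g⁻¹ ∈ Hsub q hq k := by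
  intro g hg
  refine Subgroup.conj_mem_of_mem_closure ?_ ?_ hg
  · rintro s (rfl | rfl) h hh
    · simpa [aElem_eq] using conj_affGL_mem_Hsub hq k 0 1 hh
    · simpa [tElem_eq] using conj_affGL_mem_Hsub hq k 1 0 hh
  · rintro s (rfl | rfl) h hh
    · simpa [aElem_eq, affGL_inv] using conj_affGL_mem_Hsub hq k 0 (-1) hh
    · simpa [tElem_eq, affGL_inv] using conj_affGL_mem_Hsub hq k (-1) 0 hh

end BaumslagSolitar

section Cosets

variable {G : Type*} [Group G] {S R : Set G} {H : Subgroup G}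

lemma Subgroup.exists_inv_mul_mem_of_mem_closure
    (hconj : ∀ g ∈ Subgroup.closure S, ∀ h ∈ H, g * h * g⁻¹ ∈ H) (hone : ∃ r ∈ R, r⁻¹ ∈ H)
    (hmul : ∀ r ∈ R, ∀ s ∈ S, ∃ r' ∈ R, r'⁻¹ * (r * s) ∈ H)
    (hmul_inv : ∀ r ∈ R, ∀ s ∈ S, ∃ r' ∈ R, r'⁻¹ * (r * s⁻¹) ∈ H)
    {g : G} (hg : g ∈ Subgroup.closure S) : ∃ r ∈ R, r⁻¹ * g ∈ H := by
  -- if `g = r h` with `h ∈ H`, then `g s = (r s) (s⁻¹ h s)` and `s⁻¹ h s ∈ H`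
  have step {g x : G} (hx : x ∈ Subgroup.closure S)
      (hR : ∀ r ∈ R, ∃ r' ∈ R, r'⁻¹ * (r * x) ∈ H) (hg : ∃ r ∈ R, r⁻¹ * g ∈ H) :
      ∃ r ∈ R, r⁻¹ * (g * x) ∈ H := by
    obtain ⟨r, hr, hrg⟩ := hg
    obtain ⟨r', hr', hrx⟩ := hR r hr
    refine ⟨r', hr', ?_⟩
    have hconj_x := hconj x⁻¹ (inv_mem hx) _ hrg
    rw [inv_inv] at hconj_x
    simpa only [mul_assoc, mul_inv_cancel_left] using mul_mem hrx hconj_x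
  induction hg using Subgroup.closure_induction_right with
  | one => simpa using hone
  | mul_right g _ s hs ih => exact step (Subgroup.subset_closure hs) (hmul · · s hs) ih
  | mul_inv_cancel g _ s hs ih =>
    exact step (inv_mem (Subgroup.subset_closure hs)) (hmul_inv · · s hs) ih

lemma Subgroup.finite_setOf_leftCoset_closure (hR : R.Finite)
    (hconj : ∀ g ∈ Subgroup.closure S, ∀ h ∈ H, g * h * g⁻¹ ∈ H) (hone : ∃ r ∈ R, r⁻¹ ∈ H)
    (hmul : ∀ r ∈ R, ∀ s ∈ S, ∃ r' ∈ R, r'⁻¹ * (r * s) ∈ H)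
    (hmul_inv : ∀ r ∈ R, ∀ s ∈ S, ∃ r' ∈ R, r'⁻¹ * (r * s⁻¹) ∈ H) :
    {C : Set G | ∃ g ∈ Subgroup.closure S, C = {x : G | ∃ h ∈ H, x = g * h}}.Finite := by
  refine (hR.image fun r ↦ r • (H : Set G)).subset ?_
  rintro C ⟨g, hg, rfl⟩
  obtain ⟨r, hr, hrg⟩ :=
    Subgroup.exists_inv_mul_mem_of_mem_closure hconj hone hmul hmul_inv hg
  refine ⟨r, hr, ((leftCoset_eq_iff H).2 hrg).trans ?_⟩
  ext x
  simp [Set.mem_smul_set, eq_comm]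

end Cosets

section FiniteIndex

variable {q : ℕ} (hq : 2 ≤ q) (k : ℕ)

lemma inv_affGL_mul_affGL_mem_Hsub {j j' c c' : ℤ} (hj : (k : ℤ) ∣ j - j')
    (hc : (q : ℤ) ^ k - 1 ∣ c - c') :
    (affGL (qUnit hq ^ j') c')⁻¹ * affGL (qUnit hq ^ j) c ∈ Hsub q hq k := by
  obtain ⟨n, hn⟩ := hj
  obtain ⟨m, hm⟩ := hc
  have hm' : (c : ℚ) - c' = ((q : ℚ) ^ k - 1) * m := by exact_mod_cast hm
  rw [affGL_inv, affGL_mul]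
  convert affGL_mem_Hsub hq k n (-m) (-j') using 2
  · rw [← _root_.zpow_neg, ← _root_.zpow_add, ← hn]
    ring_nf
  · simp only [Units.val_inv_eq_inv_val, Units.val_zpow_eq_zpow_val, val_qUnit,
      zpow_add₀ (natCast_ne_zero_of_two_le hq), zpow_natCast, _root_.zpow_neg, Int.cast_neg]
    linear_combination ((q : ℚ) ^ j')⁻¹ * hm'

noncomputable def HsubCosetReps : Set (GL (Fin 2) ℚ) :=
  Set.image2 (fun j i : ℤ ↦ affGL (qUnit hq ^ j) i) (Set.Ico 0 k) (Set.Ico 0 ((q : ℤ) ^ k - 1))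

lemma exists_HsubCosetReps_inv_mul_mem (hk : 0 < k) (j c : ℤ) :
    ∃ r ∈ HsubCosetReps hq k, r⁻¹ * affGL (qUnit hq ^ j) c ∈ Hsub q hq k := by
  have hM : 0 < (q : ℤ) ^ k - 1 := by
    have : (q : ℤ) ≤ (q : ℤ) ^ k := le_self_pow₀ (by omega) hk.ne'
    omega
  have hk' : (0 : ℤ) < k := by exact_mod_cast hk
  exact ⟨_, ⟨j % k, ⟨Int.emod_nonneg _ hk'.ne', Int.emod_lt_of_pos _ hk'⟩,
    c % ((q : ℤ) ^ k - 1), ⟨Int.emod_nonneg _ hM.ne', Int.emod_lt_of_pos _ hM⟩, rfl⟩,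
    inv_affGL_mul_affGL_mem_Hsub hq k Int.dvd_self_sub_emod Int.dvd_self_sub_emod⟩

lemma finite_setOf_leftCoset_Hsub (hk : 0 < k) :
    {C : Set (GL (Fin 2) ℚ) |
      ∃ g ∈ BS q hq, C = {x : GL (Fin 2) ℚ | ∃ h ∈ Hsub q hq k, x = g * h}}.Finite := by
  have hreps {r x : GL (Fin 2) ℚ} {j c : ℤ} (hx : r * x = affGL (qUnit hq ^ j) c) :
      ∃ r' ∈ HsubCosetReps hq k, r'⁻¹ * (r * x) ∈ Hsub q hq k :=
    hx ▸ exists_HsubCosetReps_inv_mul_mem hq k hk j c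
  refine Subgroup.finite_setOf_leftCoset_closure (R := HsubCosetReps hq k)
    ((Set.finite_Ico _ _).image2 _ (Set.finite_Ico _ _)) (conj_mem_Hsub hq k) ?_ ?_ ?_
  · simpa [affGL_one_zero] using exists_HsubCosetReps_inv_mul_mem hq k hk 0 0
  · rintro _ ⟨j, ⟨hj, -⟩, i, -, rfl⟩ s (rfl | rfl)
    · lift j to ℕ using hj
      refine hreps (j := j) (c := i + (q : ℤ) ^ j) ?_
      rw [aElem_eq, affGL_mul]
      simp [add_comm]
    · refine hreps (j := j + 1) (c := i) ?_
      rw [tElem_eq, affGL_mul, _root_.zpow_add_one]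
      simp
  · rintro _ ⟨j, ⟨hj, -⟩, i, -, rfl⟩ s (rfl | rfl)
    · lift j to ℕ using hj
      refine hreps (j := j) (c := i - (q : ℤ) ^ j) ?_
      rw [aElem_eq, affGL_inv, affGL_mul]
      simp [sub_eq_neg_add]
    · refine hreps (j := j - 1) (c := i) ?_
      rw [tElem_eq, affGL_inv, affGL_mul, _root_.zpow_sub_one]
      simp

end FiniteIndex

/-- `H` is a normal subgroup of `BS(1,q)` of finite index. -/
theorem Hsub_le_normal_finite_index (q : ℕ) (hq : 2 ≤ q) (k : ℤ) (hk : 1 ≤ k) :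
    Hsub q hq k ≤ BS q hq ∧
    (∀ g ∈ BS q hq, ∀ h ∈ Hsub q hq k, g * h * g⁻¹ ∈ Hsub q hq k) ∧
    Set.Finite {C : Set (GL (Fin 2) ℚ) |
      ∃ g ∈ BS q hq, C = {x : GL (Fin 2) ℚ | ∃ h ∈ Hsub q hq k, x = g * h}} := by
  refine ⟨Hsub_le_BS hq k, conj_mem_Hsub hq k, ?_⟩
  lift k to ℕ using by omega
  exact finite_setOf_leftCoset_Hsub hq k (by omega)
end

section
/- Quadratic bound on the Frobenius number of a finite set: let T be a nonempty finite set of positive natural numbers, let M be its maximum and g the greatest common divisor of its elements. Then every natural number n with g ∣ n and n > M² belongs to the additive submonoid of ℕ generated by T. -/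
/-- Bezout for a finite set: the gcd is an integer combination of the elements. -/
lemma finset_gcd_bezout (T : Finset ℕ) :
    ∃ f : ℕ → ℤ, ((T.gcd id : ℕ) : ℤ) = ∑ t ∈ T, f t * t := by
  classical
  induction T using Finset.induction_on with
  | empty => exact ⟨0, by simp⟩
  | @insert a s has ih =>
    obtain ⟨f, hf⟩ := ih
    refine ⟨fun t => if t = a then Nat.gcdA a (s.gcd id) else Nat.gcdB a (s.gcd id) * f t, ?_⟩
    rw [Finset.gcd_insert]
    have hsum : ∑ t ∈ s, (if t = a then Nat.gcdA a (s.gcd id)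
        else Nat.gcdB a (s.gcd id) * f t) * (t : ℤ)
        = Nat.gcdB a (s.gcd id) * ∑ t ∈ s, f t * t := by
      rw [Finset.mul_sum]
      refine Finset.sum_congr rfl fun t ht => ?_
      have : t ≠ a := fun h => has (h ▸ ht)
      simp [this, mul_assoc]
    rw [Finset.sum_insert has]
    beta_reduce
    rw [if_pos rfl, hsum, ← hf]
    have hgg : gcd (id a) (s.gcd id) = Nat.gcd a (s.gcd id) := rfl
    have := Nat.gcd_eq_gcd_ab a (s.gcd id)
    rw [hgg]
    push_cast at this
    linarith

/-- Quadratic bound on the Frobenius number of a finite set: every multiple of the gcd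
of `T` that exceeds the square of the maximum of `T` is a sum of elements of `T`. -/
theorem frobenius_quadratic_bound (T : Finset ℕ) (hT : T.Nonempty) (h0 : 0 ∉ T)
    (n : ℕ) (hdvd : T.gcd id ∣ n) (hn : (T.max' hT) ^ 2 < n) :
    n ∈ AddSubmonoid.closure (T : Set ℕ) := by
  classical
  set M := T.max' hT with hMdef
  set g := T.gcd id with hgdef
  have hMT : M ∈ T := T.max'_mem hT
  have hpos : ∀ t ∈ T, 0 < t := fun t ht => Nat.pos_of_ne_zero (fun h => h0 (h ▸ ht))
  have hM0 : 0 < M := hpos M hMT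
  have hle : ∀ t ∈ T, t ≤ M := fun t ht => T.le_max' t ht
  set S := AddSubmonoid.closure (T : Set ℕ) with hSdef
  -- Step 1: there is an element of the closure congruent to g mod M
  obtain ⟨f, hf⟩ := finset_gcd_bezout T
  set d : ℕ → ℕ := fun t => (f t + (f t).natAbs * M).toNat with hddef
  have hd : ∀ t, (d t : ℤ) = f t + (f t).natAbs * M := by
    intro t
    have h1 : (0 : ℤ) ≤ f t + (f t).natAbs * M := by
      have hM1 : (0 : ℤ) < (M : ℤ) := by exact_mod_cast hM0
      have h2 : -f t ≤ ((f t).natAbs : ℤ) := by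
        rw [← Int.abs_eq_natAbs]; exact neg_le_abs (f t)
      have h3 : (0 : ℤ) ≤ ((f t).natAbs : ℤ) := Int.natCast_nonneg _
      nlinarith
    simp only [hddef]
    exact Int.toNat_of_nonneg h1
  set K : ℕ := ∑ t ∈ T, (f t).natAbs * t with hKdef
  set s0 : ℕ := ∑ t ∈ T, d t * t with hs0def
  have hs0S : s0 ∈ S := by
    refine AddSubmonoid.sum_mem _ fun t ht => ?_
    have : d t * t = d t • t := by simp [smul_eq_mul]
    rw [this]
    exact AddSubmonoid.nsmul_mem _ (AddSubmonoid.subset_closure ht) _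
  have hs0 : (s0 : ℤ) = (g : ℤ) + M * K := by
    push_cast [hs0def, hKdef]
    rw [Finset.mul_sum]
    rw [hf]
    rw [← Finset.sum_add_distrib]
    refine Finset.sum_congr rfl fun t ht => ?_
    rw [hd t]
    push_cast
    ring
  have hs0n : s0 = g + M * K := by exact_mod_cast hs0
  obtain ⟨q, hq⟩ := hdvd
  -- s1 = q * s0 is in closure and congruent to n mod M
  have hs1S : q * s0 ∈ S := by
    have : q * s0 = q • s0 := by simp [smul_eq_mul]
    rw [this]; exact AddSubmonoid.nsmul_mem _ hs0S _
  have hs1mod : (q * s0) % M = n % M := by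
    have : q * s0 = n + (q * K) * M := by rw [hs0n, hq]; ring
    rw [this, Nat.add_mul_mod_self_right]
  -- Minimal element of closure in the residue class of n mod M
  set P : ℕ → Prop := fun s => s ∈ S ∧ s % M = n % M with hPdef
  have hPex : ∃ s, P s := ⟨q * s0, hs1S, hs1mod⟩
  set s := Nat.find hPex with hsdef
  obtain ⟨hsS, hsmod⟩ : P s := Nat.find_spec hPex
  -- The minimal one is a sum of fewer than M elements of T
  obtain ⟨l, hlT, hlsum⟩ := AddSubmonoid.exists_list_of_mem_closure hsS
  have hllen : l.length < M := by
    by_contra hlen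
    push_neg at hlen
    -- pigeonhole on partial sums mod M
    haveI : NeZero M := ⟨hM0.ne'⟩
    have hcard : Fintype.card (ZMod M) < Fintype.card (Fin (M + 1)) := by
      simp [ZMod.card]
    obtain ⟨i, j, hij, hFij⟩ := Fintype.exists_ne_map_eq_of_card_lt
      (fun i : Fin (M + 1) => (((l.take i).sum : ℕ) : ZMod M)) hcard
    wlog hlt : (i : ℕ) < (j : ℕ) generalizing i j
    · have hne : (i : ℕ) ≠ (j : ℕ) := fun h => hij (Fin.ext h)
      exact this j i hij.symm hFij.symm (by omega)
    -- decompose l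
    have hjle : (j : ℕ) ≤ l.length := le_trans (Nat.le_of_lt_succ j.isLt) hlen
    set mid := (l.drop i).take ((j : ℕ) - i) with hmiddef
    have htakej : l.take j = l.take i ++ mid := by
      rw [hmiddef, ← List.take_add]
      congr 1; omega
    have hdropi : l.drop i = mid ++ l.drop j := by
      rw [hmiddef]
      conv_lhs => rw [← List.take_append_drop ((j : ℕ) - i) (l.drop i)]
      congr 1
      rw [List.drop_drop]
      congr 1; omega
    have hmidsum_mod : ((mid.sum : ℕ) : ZMod M) = 0 := by
      have h1 : (((l.take j).sum : ℕ) : ZMod M) = ((l.take i).sum : ℕ) + (mid.sum : ℕ) := by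
        rw [htakej, List.sum_append]; push_cast; ring
      have := hFij
      rw [h1] at this
      -- this : ((take i).sum) = ((take i).sum) + mid.sum
      have := (left_eq_add).mp this
      exact this
    have hdvdmid : M ∣ mid.sum := by
      rwa [ZMod.natCast_eq_zero_iff] at hmidsum_mod
    have hmidlen : 0 < mid.length := by
      rw [hmiddef, List.length_take, List.length_drop]
      omega
    have hmidpos : 0 < mid.sum := by
      obtain ⟨x, hx⟩ := List.exists_mem_of_length_pos hmidlen
      have hxT : x ∈ T := by
        apply hlT
        have : x ∈ l.drop i := by rw [hdropi]; exact List.mem_append_left _ hx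
        exact List.mem_of_mem_drop this
      calc 0 < x := hpos x hxT
        _ ≤ mid.sum := List.single_le_sum (fun y _ => Nat.zero_le y) x hx
    -- build smaller element
    set s' := (l.take i).sum + (l.drop j).sum with hs'def
    have hdecomp : s = s' + mid.sum := by
      rw [← hlsum]
      conv_lhs => rw [← List.take_append_drop (i : ℕ) l]
      rw [List.sum_append, hdropi, List.sum_append, hs'def]
      ring
    have hs'S : s' ∈ S := by
      refine AddSubmonoid.add_mem _ ?_ ?_ <;>
        refine AddSubmonoid.list_sum_mem _ fun x hx => AddSubmonoid.subset_closure (hlT x ?_)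
      · exact List.mem_of_mem_take hx
      · exact List.mem_of_mem_drop hx
    have hs'mod : s' % M = n % M := by
      rw [← hsmod, hdecomp]
      obtain ⟨c, hc⟩ := hdvdmid
      rw [hc, Nat.add_mul_mod_self_left]
    have hs'lt : s' < s := by omega
    exact Nat.find_min hPex hs'lt ⟨hs'S, hs'mod⟩
  -- bound s
  have hsle : s ≤ l.length * M := by
    rw [← hlsum]
    have := List.sum_le_card_nsmul l M (fun x hx => hle x (hlT x hx))
    simpa [smul_eq_mul] using this
  have hsn : s ≤ n := by
    have h1 : s ≤ (M - 1) * M := le_trans hsle (Nat.mul_le_mul_right M (by omega))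
    have h2 : (M - 1) * M < M ^ 2 := by
      have : M - 1 < M := by omega
      calc (M - 1) * M < M * M := (Nat.mul_lt_mul_right hM0).mpr this
        _ = M ^ 2 := (sq M).symm
    omega
  -- conclude
  have hdvd2 : M ∣ n - s := (Nat.modEq_iff_dvd' hsn).mp hsmod
  obtain ⟨c, hc⟩ := hdvd2
  have hnsc : n = s + M * c := by omega
  rw [hnsc]
  refine AddSubmonoid.add_mem _ hsS ?_
  have : M * c = c • M := by simp [smul_eq_mul, mul_comm]
  rw [this]
  exact AddSubmonoid.nsmul_mem _ (AddSubmonoid.subset_closure hMT) _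
end
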